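/- arXiv:1510.07352 — 9 statements merged into one kernel-verified Lean document; each statement's English description precedes it below -/
import Mathlib

section
/- The left ideal J := B·span{Φ_K(y) − κ(y)·1_B : y ∈ k} of B is stable under b ↦ Φ_K(y)b − bΦ_K(y) for every y ∈ k, so that C := {b + J ∈ B/J : Φ_K(y)b − bΦ_K(y) ∈ J for all y ∈ k} inherits a well-defined unital ℂ-algebra structure via (b + J)(b' + J) := bb' + J. Likewise, with I_γ := the left ideal of A generated by {Φ(z) − γ(z)·1 : z ∈ g}, the set D := {u + I_γ ∈ A/I_γ : Φ(z)u − uΦ(z) ∈ I_γ for all z ∈ g} is a unital ℂ-algebra via (u + I_γ)(v + I_γ) := uv + I_γ. Finally, the assignment ((u + I_η) + J) ↦ (u + I_γ) is a well-defined homomorphism of unital ℂ-algebras from the two-stage quantum Hamiltonian reduction C to the one-shot quantum Hamiltonian reduction D. -/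
/-- With `B = N/Iη` the first-stage reduction and
`Φ_K : K → B` the induced quantum comoment map, let `J := B·span{Φ_K(y) − κ(y)·1 : y ∈ K}`
(represented by `JA ⊆ A`), `Iγ` the left ideal of `A` generated by
`{Φ(z) − γ(z)·1 : z ∈ g}`, `NC` the set of representatives of the `K`-invariants of
`B/J` (the two-stage reduction `C = NC/JA`), and `NG` the set of representatives of the
`g`-invariants of `A/Iγ` (the one-shot reduction `D = NG/Iγ`).  Then `JA` is stable
under commutator with each `Φ(y)`, `y ∈ K`, so `C` inherits a well-defined unital
ℂ-algebra structure; likewise `D` is a unital ℂ-algebra; and the assignment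
`((u + Iη) + J) ↦ (u + Iγ)` is a well-defined homomorphism of unital ℂ-algebras `C → D`
(expressed by `JA ⊆ Iγ` and `NC ⊆ NG`, the map being the identity on representatives). -/
theorem stmt1
    (A : Type*) [Ring A] [Algebra ℂ A]
    (g : Type*) [LieRing g] [LieAlgebra ℂ g]
    (Φ : g →ₗ[ℂ] A)
    (hΦ : ∀ x y : g, Φ ⁅x, y⁆ = Φ x * Φ y - Φ y * Φ x)
    (H : LieIdeal ℂ g) (K : LieSubalgebra ℂ g)
    (hdisj : H.toSubmodule ⊓ K.toSubmodule = ⊥)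
    (hsup : H.toSubmodule ⊔ K.toSubmodule = ⊤)
    (γ : g →ₗ[ℂ] ℂ) (hγ : ∀ x y : g, γ ⁅x, y⁆ = 0)
    (Iη : Submodule A A)
    (hIη : Iη = Submodule.span A {a : A | ∃ x ∈ H, a = Φ x - algebraMap ℂ A (γ x)})
    (N : Set A)
    (hN : N = {u : A | ∀ a ∈ H, Φ a * u - u * Φ a ∈ Iη})
    (JA : Submodule ℂ A)
    (hJA : JA = Submodule.span ℂ
      ({a : A | ∃ b ∈ N, ∃ y ∈ K, a = b * (Φ y - algebraMap ℂ A (γ y))} ∪ (Iη : Set A)))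
    (Iγ : Submodule A A)
    (hIγ : Iγ = Submodule.span A {a : A | ∃ z : g, a = Φ z - algebraMap ℂ A (γ z)})
    (NC : Set A)
    (hNC : NC = {u ∈ N | ∀ y ∈ K, Φ y * u - u * Φ y ∈ JA})
    (NG : Set A)
    (hNG : NG = {u : A | ∀ z : g, Φ z * u - u * Φ z ∈ Iγ}) :
    (∀ y ∈ K, ∀ w ∈ JA, Φ y * w - w * Φ y ∈ JA)
    ∧ (1 : A) ∈ NC
    ∧ (∀ u ∈ NC, ∀ v ∈ NC, u * v ∈ NC)
    ∧ (∀ u ∈ NC, ∀ v ∈ NC, ∀ u' ∈ NC, ∀ v' ∈ NC,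
        u - u' ∈ JA → v - v' ∈ JA → u * v - u' * v' ∈ JA)
    ∧ (∀ z : g, ∀ w ∈ Iγ, Φ z * w - w * Φ z ∈ Iγ)
    ∧ (1 : A) ∈ NG
    ∧ (∀ u ∈ NG, ∀ v ∈ NG, u * v ∈ NG)
    ∧ (∀ u ∈ NG, ∀ v ∈ NG, ∀ u' ∈ NG, ∀ v' ∈ NG,
        u - u' ∈ Iγ → v - v' ∈ Iγ → u * v - u' * v' ∈ Iγ)
    ∧ (JA : Set A) ⊆ (Iγ : Set A)
    ∧ NC ⊆ NG := by
  -- commutator with a generator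
  have hcomm : ∀ z x : g, Φ z * (Φ x - algebraMap ℂ A (γ x)) - (Φ x - algebraMap ℂ A (γ x)) * Φ z
      = Φ ⁅z, x⁆ - algebraMap ℂ A (γ ⁅z, x⁆) := by
    intro z x
    have hc : algebraMap ℂ A (γ x) * Φ z = Φ z * algebraMap ℂ A (γ x) := Algebra.commutes _ _
    calc Φ z * (Φ x - algebraMap ℂ A (γ x)) - (Φ x - algebraMap ℂ A (γ x)) * Φ z
        = Φ z * Φ x - Φ x * Φ z
            + (algebraMap ℂ A (γ x) * Φ z - Φ z * algebraMap ℂ A (γ x)) := by noncomm_ring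
      _ = Φ ⁅z, x⁆ - algebraMap ℂ A (γ ⁅z, x⁆) := by
            rw [hc, sub_self, add_zero, hγ, map_zero, sub_zero, hΦ]
  have genIη : ∀ x ∈ H, Φ x - algebraMap ℂ A (γ x) ∈ Iη := by
    intro x hx; rw [hIη]; exact Submodule.subset_span ⟨x, hx, rfl⟩
  have genIγ : ∀ z : g, Φ z - algebraMap ℂ A (γ z) ∈ Iγ := by
    intro z; rw [hIγ]; exact Submodule.subset_span ⟨z, rfl⟩
  -- commutator identities
  have cadd : ∀ p a b : A, p * (a + b) - (a + b) * p = (p * a - a * p) + (p * b - b * p) := by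
    intro p a b; noncomm_ring
  have cmul : ∀ p r a : A, p * (r * a) - (r * a) * p
      = (p * r - r * p) * a + r * (p * a - a * p) := by
    intro p r a; noncomm_ring
  -- Iη stable under commutator with all Φ z
  have hIηstab : ∀ z : g, ∀ w ∈ Iη, Φ z * w - w * Φ z ∈ Iη := by
    intro z w hw
    rw [hIη] at hw
    induction hw using Submodule.span_induction with
    | mem a ha =>
        obtain ⟨x, hx, rfl⟩ := ha
        rw [hcomm]
        exact genIη _ (H.lie_mem hx)
    | zero => simpa using Iη.zero_mem
    | add a b ha hb iha ihb => rw [cadd]; exact Iη.add_mem iha ihb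
    | smul r a ha ih =>
        have ha' : a ∈ Iη := hIη ▸ ha
        rw [smul_eq_mul, cmul]
        exact Iη.add_mem (by simpa [smul_eq_mul] using Iη.smul_mem (Φ z * r - r * Φ z) ha')
          (by simpa [smul_eq_mul] using Iη.smul_mem r ih)
  -- Iγ stable (goal 5)
  have hIγstab : ∀ z : g, ∀ w ∈ Iγ, Φ z * w - w * Φ z ∈ Iγ := by
    intro z w hw
    rw [hIγ] at hw
    induction hw using Submodule.span_induction with
    | mem a ha =>
        obtain ⟨x, rfl⟩ := ha
        rw [hcomm]; exact genIγ _
    | zero => simpa using Iγ.zero_mem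
    | add a b ha hb iha ihb => rw [cadd]; exact Iγ.add_mem iha ihb
    | smul r a ha ih =>
        have ha' : a ∈ Iγ := hIγ ▸ ha
        rw [smul_eq_mul, cmul]
        exact Iγ.add_mem (by simpa [smul_eq_mul] using Iγ.smul_mem (Φ z * r - r * Φ z) ha')
          (by simpa [smul_eq_mul] using Iγ.smul_mem r ih)
  -- generator times invariant
  have genmul : ∀ (c q v : A), c * v = v * c → (q - c) * v = v * (q - c) + (q * v - v * q) := by
    intro c q v hc
    calc (q - c) * v = q * v - c * v := by noncomm_ring
      _ = q * v - v * c := by rw [hc]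
      _ = v * (q - c) + (q * v - v * q) := by noncomm_ring
  -- Iη * N ⊆ Iη
  have hIηmulN : ∀ w ∈ Iη, ∀ v, (∀ a ∈ H, Φ a * v - v * Φ a ∈ Iη) → w * v ∈ Iη := by
    intro w hw v hv
    rw [hIη] at hw
    induction hw using Submodule.span_induction with
    | mem a ha =>
        obtain ⟨x, hx, rfl⟩ := ha
        rw [genmul _ _ _ (Algebra.commutes _ _)]
        exact Iη.add_mem (by simpa [smul_eq_mul] using Iη.smul_mem v (genIη x hx)) (hv x hx)
    | zero => simpa using Iη.zero_mem
    | add a b ha hb iha ihb => rw [add_mul]; exact Iη.add_mem iha ihb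
    | smul r a ha ih =>
        rw [smul_eq_mul, mul_assoc]
        simpa [smul_eq_mul] using Iη.smul_mem r ih
  -- Iγ * NG ⊆ Iγ
  have hIγmulNG : ∀ w ∈ Iγ, ∀ v, (∀ z : g, Φ z * v - v * Φ z ∈ Iγ) → w * v ∈ Iγ := by
    intro w hw v hv
    rw [hIγ] at hw
    induction hw using Submodule.span_induction with
    | mem a ha =>
        obtain ⟨x, rfl⟩ := ha
        rw [genmul _ _ _ (Algebra.commutes _ _)]
        exact Iγ.add_mem (by simpa [smul_eq_mul] using Iγ.smul_mem v (genIγ x)) (hv x)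
    | zero => simpa using Iγ.zero_mem
    | add a b ha hb iha ihb => rw [add_mul]; exact Iγ.add_mem iha ihb
    | smul r a ha ih =>
        rw [smul_eq_mul, mul_assoc]
        simpa [smul_eq_mul] using Iγ.smul_mem r ih
  -- N facts
  have h1N : (1 : A) ∈ N := by rw [hN]; intro a ha; simp
  have hNmul : ∀ u ∈ N, ∀ v ∈ N, u * v ∈ N := by
    intro u hu v hv
    rw [hN] at hu hv ⊢
    intro a ha
    have key : Φ a * (u * v) - (u * v) * Φ a
        = (Φ a * u - u * Φ a) * v + u * (Φ a * v - v * Φ a) := by noncomm_ring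
    rw [key]
    exact Iη.add_mem (hIηmulN _ (hu a ha) v hv)
      (by simpa [smul_eq_mul] using Iη.smul_mem u (hv a ha))
  have hNstab : ∀ z : g, ∀ u ∈ N, Φ z * u - u * Φ z ∈ N := by
    intro z u hu
    rw [hN] at hu ⊢
    intro a ha
    have key : Φ a * (Φ z * u - u * Φ z) - (Φ z * u - u * Φ z) * Φ a
        = (Φ ⁅a, z⁆ * u - u * Φ ⁅a, z⁆)
          + (Φ z * (Φ a * u - u * Φ a) - (Φ a * u - u * Φ a) * Φ z) := by
      rw [hΦ]; noncomm_ring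
    rw [key]
    have haz : ⁅a, z⁆ ∈ H := by
      rw [← lie_skew]; exact H.neg_mem (H.lie_mem ha)
    exact Iη.add_mem (hu _ haz) (hIηstab z _ (hu a ha))
  -- JA membership helpers
  have genJA : ∀ b ∈ N, ∀ y ∈ K, b * (Φ y - algebraMap ℂ A (γ y)) ∈ JA := by
    intro b hb y hy; rw [hJA]
    exact Submodule.subset_span (Or.inl ⟨b, hb, y, hy, rfl⟩)
  have hIηJA : ∀ w ∈ Iη, w ∈ JA := by
    intro w hw; rw [hJA]; exact Submodule.subset_span (Or.inr hw)
  -- N * JA ⊆ JA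
  have hNmulJA : ∀ u ∈ N, ∀ w ∈ JA, u * w ∈ JA := by
    intro u hu w hw
    rw [hJA] at hw
    induction hw using Submodule.span_induction with
    | mem a ha =>
        rcases ha with ⟨b, hb, y, hy, rfl⟩ | ha
        · rw [← mul_assoc]; exact genJA _ (hNmul u hu b hb) y hy
        · refine hIηJA _ ?_
          have h' := Iη.smul_mem u ha
          rwa [smul_eq_mul] at h'
    | zero => simpa using JA.zero_mem
    | add a b ha hb iha ihb => rw [mul_add]; exact JA.add_mem iha ihb
    | smul c a ha ih => rw [mul_smul_comm]; exact JA.smul_mem c ih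
  -- JA * NC ⊆ JA
  have hJAmulNC : ∀ w ∈ JA, ∀ v, v ∈ N → (∀ y ∈ K, Φ y * v - v * Φ y ∈ JA) → w * v ∈ JA := by
    intro w hw v hvN hvK
    rw [hJA] at hw
    induction hw using Submodule.span_induction with
    | mem a ha =>
        rcases ha with ⟨b, hb, y, hy, rfl⟩ | ha
        · have key : b * (Φ y - algebraMap ℂ A (γ y)) * v
              = b * v * (Φ y - algebraMap ℂ A (γ y)) + b * (Φ y * v - v * Φ y) := by
            rw [mul_assoc, genmul _ _ _ (Algebra.commutes _ _)]; noncomm_ring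
          rw [key]
          exact JA.add_mem (genJA _ (hNmul b hb v hvN) y hy) (hNmulJA b hb _ (hvK y hy))
        · exact hIηJA _ (hIηmulN _ ha v (by rw [hN] at hvN; exact hvN))
    | zero => simpa using JA.zero_mem
    | add a b ha hb iha ihb => rw [add_mul]; exact JA.add_mem iha ihb
    | smul c a ha ih => rw [smul_mul_assoc]; exact JA.smul_mem c ih
  -- Goal 1 : JA stable under commutator with Φ y, y ∈ K
  have goal1 : ∀ y ∈ K, ∀ w ∈ JA, Φ y * w - w * Φ y ∈ JA := by
    intro y hy w hw
    rw [hJA] at hw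
    induction hw using Submodule.span_induction with
    | mem a ha =>
        rcases ha with ⟨b, hb, y', hy', rfl⟩ | ha
        · have key : Φ y * (b * (Φ y' - algebraMap ℂ A (γ y')))
              - b * (Φ y' - algebraMap ℂ A (γ y')) * Φ y
              = (Φ y * b - b * Φ y) * (Φ y' - algebraMap ℂ A (γ y'))
                + b * (Φ y * (Φ y' - algebraMap ℂ A (γ y'))
                    - (Φ y' - algebraMap ℂ A (γ y')) * Φ y) := by noncomm_ring
          rw [key, hcomm]
          exact JA.add_mem (genJA _ (hNstab y b hb) y' hy')
            (genJA _ hb _ (K.lie_mem hy hy'))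
        · exact hIηJA _ (hIηstab y _ ha)
    | zero => simpa using JA.zero_mem
    | add a b ha hb iha ihb => rw [cadd]; exact JA.add_mem iha ihb
    | smul c a ha ih =>
        have : Φ y * (c • a) - (c • a) * Φ y = c • (Φ y * a - a * Φ y) := by
          rw [mul_smul_comm, smul_mul_assoc, smul_sub]
        rw [this]; exact JA.smul_mem c ih
  -- NC membership characterization
  have memNC : ∀ u, u ∈ NC ↔ u ∈ N ∧ ∀ y ∈ K, Φ y * u - u * Φ y ∈ JA := by
    intro u; rw [hNC]; exact Iff.rfl
  refine ⟨goal1, ?_, ?_, ?_, hIγstab, ?_, ?_, ?_, ?_, ?_⟩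
  · -- 1 ∈ NC
    rw [memNC]; exact ⟨h1N, fun y hy => by simpa using JA.zero_mem⟩
  · -- NC multiplicative
    intro u hu v hv
    rw [memNC] at hu hv ⊢
    refine ⟨hNmul u hu.1 v hv.1, fun y hy => ?_⟩
    have key : Φ y * (u * v) - (u * v) * Φ y
        = (Φ y * u - u * Φ y) * v + u * (Φ y * v - v * Φ y) := by noncomm_ring
    rw [key]
    exact JA.add_mem (hJAmulNC _ (hu.2 y hy) v hv.1 hv.2) (hNmulJA u hu.1 _ (hv.2 y hy))
  · -- NC well-definedness
    intro u hu v hv u' hu' v' hv' h1 h2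
    rw [memNC] at hu hu' hv hv'
    have key : u * v - u' * v' = u * (v - v') + (u - u') * v' := by noncomm_ring
    rw [key]
    exact JA.add_mem (hNmulJA u hu.1 _ h2) (hJAmulNC _ h1 v' hv'.1 hv'.2)
  · -- 1 ∈ NG
    rw [hNG]; intro z; simpa using Iγ.zero_mem
  · -- NG multiplicative
    intro u hu v hv
    rw [hNG] at hu hv ⊢
    intro z
    have key : Φ z * (u * v) - (u * v) * Φ z
        = (Φ z * u - u * Φ z) * v + u * (Φ z * v - v * Φ z) := by noncomm_ring
    rw [key]
    exact Iγ.add_mem (hIγmulNG _ (hu z) v hv)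
      (by simpa [smul_eq_mul] using Iγ.smul_mem u (hv z))
  · -- NG well-definedness
    intro u hu v hv u' hu' v' hv' h1 h2
    rw [hNG] at hu hu' hv hv'
    have key : u * v - u' * v' = u * (v - v') + (u - u') * v' := by noncomm_ring
    rw [key]
    exact Iγ.add_mem (by simpa [smul_eq_mul] using Iγ.smul_mem u h2) (hIγmulNG _ h1 v' hv')
  · -- JA ⊆ Iγ
    have hIηle : ∀ w ∈ Iη, w ∈ Iγ := by
      intro w hw
      rw [hIη] at hw
      refine Submodule.span_le.mpr ?_ hw
      rintro a ⟨x, hx, rfl⟩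
      exact genIγ x
    intro w hw
    rw [hJA] at hw
    have : Submodule.span ℂ
        ({a : A | ∃ b ∈ N, ∃ y ∈ K, a = b * (Φ y - algebraMap ℂ A (γ y))} ∪ (Iη : Set A))
        ≤ Iγ.restrictScalars ℂ := by
      refine Submodule.span_le.mpr ?_
      rintro a (⟨b, hb, y, hy, rfl⟩ | ha)
      · exact by simpa [smul_eq_mul] using Iγ.smul_mem b (genIγ y)
      · exact hIηle _ ha
    exact this hw
  · -- NC ⊆ NG
    intro u hu
    rw [memNC] at hu
    rw [hNG]
    intro z
    have hIηle : ∀ w ∈ Iη, w ∈ Iγ := by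
      intro w hw
      rw [hIη] at hw
      refine Submodule.span_le.mpr ?_ hw
      rintro a ⟨x, hx, rfl⟩
      exact genIγ x
    have hJAle : ∀ w ∈ JA, w ∈ Iγ := by
      intro w hw
      rw [hJA] at hw
      refine Submodule.span_le (p := Iγ.restrictScalars ℂ) |>.mpr ?_ hw
      rintro a (⟨b, hb, y, hy, rfl⟩ | ha)
      · exact by simpa [smul_eq_mul] using Iγ.smul_mem b (genIγ y)
      · exact hIηle _ ha
    have hz : z ∈ H.toSubmodule ⊔ K.toSubmodule := hsup ▸ Submodule.mem_top
    obtain ⟨a, ha, y, hy, rfl⟩ := Submodule.mem_sup.mp hz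
    have key : Φ (a + y) * u - u * Φ (a + y)
        = (Φ a * u - u * Φ a) + (Φ y * u - u * Φ y) := by
      rw [map_add]; noncomm_ring
    rw [key]
    have huN := hN ▸ hu.1
    exact Iγ.add_mem (hIηle _ (huN a ha)) (hJAle _ (hu.2 y hy))
end

section
/- λ covers μ in the dominance order if and only if there exist indices j < k such that μ_j = λ_j − 1, μ_k = λ_k + 1, μ_i = λ_i for all i ∉ {j,k}, and either k = j + 1 or λ_k = λ_j − 2. -/
/-- `a` is a partition of `n`: a nonincreasing sequence of nonnegative integers,
eventually zero, summing to `n` (padded on the right with zeros). -/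
def IsPartitionOf (n : ℕ) (a : ℕ → ℕ) : Prop :=
  Antitone a ∧ ∃ N : ℕ, (∀ i, N ≤ i → a i = 0) ∧ ∑ i ∈ Finset.range N, a i = n

/-- The dominance order: `Dominates a b` means `b ≤ a`, i.e.
`Σ_{i=1}^{ℓ} b_i ≤ Σ_{i=1}^{ℓ} a_i` for every `ℓ`. -/
def Dominates (a b : ℕ → ℕ) : Prop :=
  ∀ ℓ : ℕ, ∑ i ∈ Finset.range ℓ, b i ≤ ∑ i ∈ Finset.range ℓ, a i

/-- `lam` covers `mu` in the dominance order on partitions of `n`: `mu ≤ lam`,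
`mu ≠ lam`, and there is no partition of `n` strictly between them. -/
def CoversDom (n : ℕ) (lam mu : ℕ → ℕ) : Prop :=
  Dominates lam mu ∧ mu ≠ lam ∧
    ∀ ν : ℕ → ℕ, IsPartitionOf n ν → Dominates lam ν → Dominates ν mu →
      ν = mu ∨ ν = lam

private def S (a : ℕ → ℕ) (ℓ : ℕ) : ℕ := ∑ i ∈ Finset.range ℓ, a i

private lemma S_succ (a : ℕ → ℕ) (t : ℕ) : S a (t + 1) = S a t + a t :=
  Finset.sum_range_succ a t

private lemma S_ext {a b : ℕ → ℕ} (h : ∀ ℓ, S a ℓ = S b ℓ) : a = b := by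
  funext i
  have h1 := h i
  have h2 := h (i + 1)
  rw [S_succ, S_succ] at h2
  omega

private lemma S_agree {a b : ℕ → ℕ} {ℓ : ℕ} (h : ∀ i, i < ℓ → a i = b i) :
    S a ℓ = S b ℓ :=
  Finset.sum_congr rfl fun i hi => h i (Finset.mem_range.mp hi)

private lemma S_stable {a : ℕ → ℕ} {N : ℕ} (h : ∀ i, N ≤ i → a i = 0) {ℓ : ℕ}
    (hℓ : N ≤ ℓ) : S a ℓ = S a N := by
  induction ℓ, hℓ using Nat.le_induction with
  | base => rfl
  | succ t ht ih =>
    rw [S_succ, h t ht, ih]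
    omega


private def raiseF (a : ℕ → ℕ) (j k : ℕ) : ℕ → ℕ := fun i =>
  if i = j then a j + 1 else if i = k then a k - 1 else a i

private def lowerF (a : ℕ → ℕ) (j k : ℕ) : ℕ → ℕ := fun i =>
  if i = j then a j - 1 else if i = k then a k + 1 else a i

private lemma raiseF_eq_self {a : ℕ → ℕ} {j k i : ℕ} (h1 : i ≠ j) (h2 : i ≠ k) :
    raiseF a j k i = a i := by
  simp only [raiseF]
  rw [if_neg h1, if_neg h2]

private lemma raiseF_at_left (a : ℕ → ℕ) (j k : ℕ) : raiseF a j k j = a j + 1 := by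
  simp [raiseF]

private lemma raiseF_at_right {a : ℕ → ℕ} {j k : ℕ} (h : k ≠ j) :
    raiseF a j k k = a k - 1 := by
  simp [raiseF, h]

private lemma lowerF_eq_self {a : ℕ → ℕ} {j k i : ℕ} (h1 : i ≠ j) (h2 : i ≠ k) :
    lowerF a j k i = a i := by
  simp only [lowerF]
  rw [if_neg h1, if_neg h2]

private lemma lowerF_at_left (a : ℕ → ℕ) (j k : ℕ) : lowerF a j k j = a j - 1 := by
  simp [lowerF]

private lemma lowerF_at_right {a : ℕ → ℕ} {j k : ℕ} (h : k ≠ j) :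
    lowerF a j k k = a k + 1 := by
  simp [lowerF, h]

private lemma S_raise (a : ℕ → ℕ) {j k : ℕ} (hjk : j < k) (hk : 1 ≤ a k) (ℓ : ℕ) :
    S (raiseF a j k) ℓ = S a ℓ + (if j < ℓ ∧ ℓ ≤ k then 1 else 0) := by
  induction ℓ with
  | zero =>
    simp only [S, Finset.range_zero, Finset.sum_empty]
    rw [if_neg (by omega)]
    omega
  | succ t ih =>
    rw [S_succ, S_succ, ih]
    rcases eq_or_ne t j with h | h
    · rw [h, raiseF_at_left]
      split_ifs <;> omega
    · rcases eq_or_ne t k with h2 | h2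
      · rw [h2, raiseF_at_right (show k ≠ j by omega)]
        split_ifs <;> omega
      · rw [raiseF_eq_self h h2]
        split_ifs <;> omega

private lemma S_lower (a : ℕ → ℕ) {j k : ℕ} (hjk : j < k) (hj1 : 1 ≤ a j) (ℓ : ℕ) :
    S (lowerF a j k) ℓ + (if j < ℓ ∧ ℓ ≤ k then 1 else 0) = S a ℓ := by
  induction ℓ with
  | zero =>
    simp only [S, Finset.range_zero, Finset.sum_empty]
    rw [if_neg (by omega)]
    omega
  | succ t ih =>
    rw [S_succ, S_succ]
    rcases eq_or_ne t j with h | h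
    · rw [h] at ih
      rw [h, lowerF_at_left]
      split_ifs at ih ⊢ <;> omega
    · rcases eq_or_ne t k with h2 | h2
      · rw [h2] at ih
        rw [h2, lowerF_at_right (show k ≠ j by omega)]
        split_ifs at ih ⊢ <;> omega
      · rw [lowerF_eq_self h h2]
        split_ifs at ih ⊢ <;> omega

private lemma raise_antitone {a : ℕ → ℕ} (ha : Antitone a) {j k : ℕ} (hjk : j < k)
    (h1 : ∀ i, i + 1 = j → a j + 1 ≤ a i)
    (h2 : a (k + 1) + 1 ≤ a k) :
    Antitone (raiseF a j k) := by
  apply antitone_nat_of_succ_le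
  intro i
  have hai : a (i + 1) ≤ a i := ha (Nat.le_succ i)
  have hjk' : a k ≤ a j := ha hjk.le
  show raiseF a j k (i + 1) ≤ raiseF a j k i
  unfold raiseF
  rcases eq_or_ne (i + 1) j with hL1 | hL1
  · rw [if_pos hL1, if_neg (show i ≠ j by omega), if_neg (show i ≠ k by omega)]
    exact h1 i hL1
  · rw [if_neg hL1]
    rcases eq_or_ne (i + 1) k with hL2 | hL2
    · rw [if_pos hL2]
      rcases eq_or_ne i j with hR1 | hR1
      · rw [if_pos hR1]; omega
      · rw [if_neg hR1, if_neg (show i ≠ k by omega), ← hL2]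
        omega
    · rw [if_neg hL2]
      rcases eq_or_ne i j with hR1 | hR1
      · rw [if_pos hR1, ← hR1]; omega
      · rw [if_neg hR1]
        rcases eq_or_ne i k with hR2 | hR2
        · rw [if_pos hR2]
          rw [hR2] at hai ⊢
          omega
        · rw [if_neg hR2]; exact hai

private lemma lower_antitone {a : ℕ → ℕ} (ha : Antitone a) {j k : ℕ} (hjk : j < k)
    (g1 : k = j + 1 → a k + 2 ≤ a j)
    (g2 : j + 1 < k → a (j + 1) + 1 ≤ a j)
    (g3 : ∀ i, i + 1 = k → i ≠ j → a k + 1 ≤ a i) :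
    Antitone (lowerF a j k) := by
  apply antitone_nat_of_succ_le
  intro i
  have hai : a (i + 1) ≤ a i := ha (Nat.le_succ i)
  show lowerF a j k (i + 1) ≤ lowerF a j k i
  unfold lowerF
  rcases eq_or_ne (i + 1) j with hL1 | hL1
  · rw [if_pos hL1, if_neg (show i ≠ j by omega), if_neg (show i ≠ k by omega), ← hL1]
    omega
  · rw [if_neg hL1]
    rcases eq_or_ne (i + 1) k with hL2 | hL2
    · rw [if_pos hL2]
      rcases eq_or_ne i j with hR1 | hR1
      · rw [if_pos hR1]
        have := g1 (by omega)
        omega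
      · rw [if_neg hR1, if_neg (show i ≠ k by omega)]
        exact g3 i hL2 hR1
    · rw [if_neg hL2]
      rcases eq_or_ne i j with hR1 | hR1
      · rw [if_pos hR1]
        have hg := g2 (by omega)
        rw [hR1] at hai ⊢
        omega
      · rw [if_neg hR1]
        rcases eq_or_ne i k with hR2 | hR2
        · rw [if_pos hR2]
          rw [hR2] at hai ⊢
          omega
        · rw [if_neg hR2]; exact hai

/-- Gerstenhaber. `λ` covers `μ` in the dominance order iff there are
indices `j < k` with `μ_j = λ_j − 1`, `μ_k = λ_k + 1`, `μ_i = λ_i` otherwise, and either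
`k = j + 1` or `λ_k = λ_j − 2`. -/
theorem stmt2 (n : ℕ) (lam mu : ℕ → ℕ)
    (hlam : IsPartitionOf n lam) (hmu : IsPartitionOf n mu) :
    CoversDom n lam mu ↔
      ∃ j k : ℕ, j < k ∧ mu j + 1 = lam j ∧ mu k = lam k + 1 ∧
        (∀ i, i ≠ j → i ≠ k → mu i = lam i) ∧
        (k = j + 1 ∨ lam k + 2 = lam j) := by
  obtain ⟨hlm, Nl, hNl, hNlsum⟩ := hlam
  obtain ⟨hmuanti, Nm, hNm, hNmsum⟩ := hmu
  constructor
  · rintro ⟨hdom, hne, hmin⟩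
    have hdom' : ∀ ℓ, S mu ℓ ≤ S lam ℓ := hdom
    have hmun : ∀ ℓ, Nm ≤ ℓ → S mu ℓ = n := fun ℓ h => by
      rw [S_stable hNm h]; exact hNmsum
    have hlamn : ∀ ℓ, Nl ≤ ℓ → S lam ℓ = n := fun ℓ h => by
      rw [S_stable hNl h]; exact hNlsum
    have hne' : ∃ i, mu i ≠ lam i := Function.ne_iff.mp hne
    obtain ⟨j, hjspec, hjmin⟩ : ∃ j, mu j ≠ lam j ∧ ∀ i, i < j → mu i = lam i :=
      ⟨Nat.find hne', Nat.find_spec hne',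
        fun i h => not_not.mp (Nat.find_min hne' h)⟩
    have hSj : S mu j = S lam j := S_agree fun i hi => hjmin i hi
    have hjlt : mu j < lam j := by
      have h1 := hdom' (j + 1)
      rw [S_succ, S_succ] at h1
      omega
    have hmex : ∃ ℓ, j + 1 ≤ ℓ ∧ S mu (ℓ + 1) = S lam (ℓ + 1) :=
      ⟨Nl + Nm + j + 1, by omega, by rw [hmun _ (by omega), hlamn _ (by omega)]⟩
    obtain ⟨m, ⟨hm1, hm2⟩, hmmin0⟩ :
        ∃ m, (j + 1 ≤ m ∧ S mu (m + 1) = S lam (m + 1)) ∧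
          ∀ ℓ, ℓ < m → ¬(j + 1 ≤ ℓ ∧ S mu (ℓ + 1) = S lam (ℓ + 1)) :=
      ⟨Nat.find hmex, Nat.find_spec hmex, fun ℓ h => Nat.find_min hmex h⟩
    have hg : ∀ ℓ, j + 1 ≤ ℓ → ℓ ≤ m → S mu ℓ + 1 ≤ S lam ℓ := by
      intro ℓ h1 h2
      rcases eq_or_ne ℓ (j + 1) with h | h
      · have e2 := S_succ mu j
        have e3 := S_succ lam j
        rw [h]
        omega
      · have h3 := hmmin0 (ℓ - 1) (by omega)
        have h4 := hdom' ℓ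
        have h5 : ℓ - 1 + 1 = ℓ := by omega
        rw [h5] at h3
        have h6 : ¬(S mu ℓ = S lam ℓ) := fun hc => h3 ⟨by omega, hc⟩
        omega
    have hmum : lam m + 1 ≤ mu m := by
      have h1 := hg m hm1 le_rfl
      have e1 := S_succ mu m
      have e2 := S_succ lam m
      omega
    have hmum1 : mu (m + 1) + 1 ≤ mu m := by
      have h1 := hdom' (m + 1 + 1)
      have e1 := S_succ mu (m + 1)
      have e2 := S_succ lam (m + 1)
      have h2 : lam (m + 1) ≤ lam m := hlm (Nat.le_succ m)
      omega
    have hjm : j < m := by omega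
    have hraise_anti : Antitone (raiseF mu j m) :=
      raise_antitone hmuanti hjm
        (fun i hi => by
          have e1 : mu i = lam i := hjmin i (by omega)
          have e2 : lam j ≤ lam i := hlm (by omega : i ≤ j)
          omega)
        hmum1
    have hSν := fun ℓ => S_raise mu hjm (by omega : 1 ≤ mu m) ℓ
    have hν_part : IsPartitionOf n (raiseF mu j m) := by
      refine ⟨hraise_anti, Nm + m + 1, fun i hi => ?_, ?_⟩
      · rw [raiseF_eq_self (show i ≠ j by omega) (show i ≠ m by omega)]
        exact hNm i (by omega)
      · show S (raiseF mu j m) (Nm + m + 1) = n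
        rw [hSν, if_neg (by omega)]
        simpa using hmun _ (by omega)
    have hdlν : Dominates lam (raiseF mu j m) := by
      intro ℓ
      show S (raiseF mu j m) ℓ ≤ S lam ℓ
      rw [hSν]
      by_cases hc : j < ℓ ∧ ℓ ≤ m
      · rw [if_pos hc]; exact hg ℓ (by omega) hc.2
      · rw [if_neg hc]; simpa using hdom' ℓ
    have hdνμ : Dominates (raiseF mu j m) mu := by
      intro ℓ
      show S mu ℓ ≤ S (raiseF mu j m) ℓ
      rw [hSν]
      exact Nat.le_add_right _ _
    rcases hmin _ hν_part hdlν hdνμ with hvm | hvl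
    · exfalso
      have h := congrFun hvm j
      rw [raiseF_at_left] at h
      omega
    · have hlj : mu j + 1 = lam j := by
        have h := congrFun hvl j
        rw [raiseF_at_left] at h
        omega
      have hlmmv : mu m = lam m + 1 := by
        have h := congrFun hvl m
        rw [raiseF_at_right (show m ≠ j by omega)] at h
        omega
      have heqv : ∀ i, i ≠ j → i ≠ m → mu i = lam i := by
        intro i hi1 hi2
        have h := congrFun hvl i
        rw [raiseF_eq_self hi1 hi2] at h
        omega
      refine ⟨j, m, hjm, hlj, hlmmv, heqv, ?_⟩
      by_contra hcon
      push_neg at hcon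
      obtain ⟨hcon1, hcon2⟩ := hcon
      have hj2 : j + 2 ≤ m := by omega
      have hmujm : mu m ≤ mu j := hmuanti (by omega : j ≤ m)
      have h3 : lam m + 3 ≤ lam j := by omega
      have hSid : ∀ ℓ, S mu ℓ + (if j < ℓ ∧ ℓ ≤ m then 1 else 0) = S lam ℓ := by
        intro ℓ
        conv_rhs => rw [← hvl]
        exact (hSν ℓ).symm
      have hpex : ∃ t, j + 1 ≤ t ∧ lam t ≤ lam m + 1 := ⟨m, by omega, by omega⟩
      obtain ⟨p, ⟨hp1, hp2⟩, hpmin0⟩ : ∃ p, (j + 1 ≤ p ∧ lam p ≤ lam m + 1) ∧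
          ∀ t, t < p → ¬(j + 1 ≤ t ∧ lam t ≤ lam m + 1) :=
        ⟨Nat.find hpex, Nat.find_spec hpex, fun t h => Nat.find_min hpex h⟩
      have hpm : p ≤ m := by
        by_contra hcp
        exact hpmin0 m (by omega) ⟨by omega, by omega⟩
      have hlam_pm1 : lam m + 2 ≤ lam (p - 1) := by
        rcases eq_or_ne p (j + 1) with h | h
        · have hpp : p - 1 = j := by omega
          rw [hpp]; omega
        · have hq := hpmin0 (p - 1) (by omega)
          omega
      rcases eq_or_ne p (j + 1) with hpj | hpj
      · -- intermediate partition: move a box from row j to row j+1 in lam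
        have hlamp : lam (j + 1) = lam p := by rw [hpj]
        have hjj1 : lam (j + 1) + 2 ≤ lam j := by omega
        have hanti1 : Antitone (lowerF lam j (j + 1)) :=
          lower_antitone hlm (show j < j + 1 by omega)
            (fun _ => by omega)
            (fun h => absurd h (by omega))
            (fun i hi1 hi2 => absurd (by omega : i = j) hi2)
        have hS1 := fun ℓ => S_lower lam (show j < j + 1 by omega)
          (show 1 ≤ lam j by omega) ℓ
        have hpart1 : IsPartitionOf n (lowerF lam j (j + 1)) := by
          refine ⟨hanti1, Nl + j + 2, fun i hi => ?_, ?_⟩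
          · rw [lowerF_eq_self (show i ≠ j by omega) (show i ≠ j + 1 by omega)]
            exact hNl i (by omega)
          · show S (lowerF lam j (j + 1)) (Nl + j + 2) = n
            have h1 := hS1 (Nl + j + 2)
            rw [if_neg (by omega)] at h1
            have h2 := hlamn (Nl + j + 2) (by omega)
            omega
        have hd1 : Dominates lam (lowerF lam j (j + 1)) := by
          intro ℓ
          show S (lowerF lam j (j + 1)) ℓ ≤ S lam ℓ
          have h1 := hS1 ℓ
          split_ifs at h1 <;> omega
        have hd2 : Dominates (lowerF lam j (j + 1)) mu := by
          intro ℓ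
          show S mu ℓ ≤ S (lowerF lam j (j + 1)) ℓ
          have h1 := hS1 ℓ
          have h2 := hSid ℓ
          split_ifs at h1 h2 <;> omega
        rcases hmin _ hpart1 hd1 hd2 with hc1 | hc1
        · have h := congrFun hc1 m
          rw [lowerF_eq_self (show m ≠ j by omega) (show m ≠ j + 1 by omega)] at h
          omega
        · have h := congrFun hc1 j
          rw [lowerF_at_left] at h
          omega
      · -- intermediate partition: move a box from row p-1 to row m in lam
        have hip : j + 1 ≤ p - 1 := by omega
        have him : p - 1 < m := by omega
        have hanti3 : Antitone (lowerF lam (p - 1) m) :=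
          lower_antitone hlm him
            (fun h => by omega)
            (fun h => by
              have hq : p - 1 + 1 = p := by omega
              rw [hq]; omega)
            (fun i hi1 hi2 => by
              have e1 : mu i = lam i := heqv i (by omega) (by omega)
              have e2 : mu m ≤ mu i := hmuanti (by omega : i ≤ m)
              omega)
        have hS3 := fun ℓ => S_lower lam him (show 1 ≤ lam (p - 1) by omega) ℓ
        have hpart3 : IsPartitionOf n (lowerF lam (p - 1) m) := by
          refine ⟨hanti3, Nl + m + 1, fun i hi => ?_, ?_⟩
          · rw [lowerF_eq_self (show i ≠ p - 1 by omega) (show i ≠ m by omega)]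
            exact hNl i (by omega)
          · show S (lowerF lam (p - 1) m) (Nl + m + 1) = n
            have h1 := hS3 (Nl + m + 1)
            rw [if_neg (by omega)] at h1
            have h2 := hlamn (Nl + m + 1) (by omega)
            omega
        have hd1 : Dominates lam (lowerF lam (p - 1) m) := by
          intro ℓ
          show S (lowerF lam (p - 1) m) ℓ ≤ S lam ℓ
          have h1 := hS3 ℓ
          split_ifs at h1 <;> omega
        have hd2 : Dominates (lowerF lam (p - 1) m) mu := by
          intro ℓ
          show S mu ℓ ≤ S (lowerF lam (p - 1) m) ℓ
          have h1 := hS3 ℓ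
          have h2 := hSid ℓ
          split_ifs at h1 h2 <;> omega
        rcases hmin _ hpart3 hd1 hd2 with hc1 | hc1
        · have h := congrFun hc1 j
          rw [lowerF_eq_self (show j ≠ p - 1 by omega) (show j ≠ m by omega)] at h
          omega
        · have h := congrFun hc1 (p - 1)
          rw [lowerF_at_left] at h
          omega
  · rintro ⟨j, k, hjk, hj, hk, heq, hcond⟩
    have hS : ∀ ℓ, S mu ℓ + (if j < ℓ ∧ ℓ ≤ k then 1 else 0) = S lam ℓ := by
      intro ℓ
      induction ℓ with
      | zero =>
        simp only [S, Finset.range_zero, Finset.sum_empty]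
        rw [if_neg (by omega)]
        omega
      | succ t ih =>
        rw [S_succ, S_succ]
        rcases eq_or_ne t j with h | h
        · have hv : mu t + 1 = lam t := by rw [h]; exact hj
          split_ifs at ih ⊢ <;> omega
        · rcases eq_or_ne t k with h2 | h2
          · have hv : mu t = lam t + 1 := by rw [h2]; exact hk
            split_ifs at ih ⊢ <;> omega
          · have hv : mu t = lam t := heq t h h2
            split_ifs at ih ⊢ <;> omega
    refine ⟨?_, ?_, ?_⟩
    · intro ℓ
      show S mu ℓ ≤ S lam ℓ
      have h1 := hS ℓ
      split_ifs at h1 <;> omega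
    · intro hcon
      have h := congrFun hcon j
      omega
    · intro ν hν hlν hνμ
      obtain ⟨hνa, -⟩ := hν
      have hl : ∀ ℓ, S ν ℓ ≤ S lam ℓ := hlν
      have hmν : ∀ ℓ, S mu ℓ ≤ S ν ℓ := hνμ
      have hsand : ∀ ℓ, S ν ℓ = S lam ℓ ∨ (j < ℓ ∧ ℓ ≤ k ∧ S ν ℓ + 1 = S lam ℓ) := by
        intro ℓ
        have h1 := hS ℓ
        have h2 := hl ℓ
        have h3 := hmν ℓ
        split_ifs at h1 with hc
        · omega
        · omega
      by_cases hC : ∀ t, j < t → t ≤ k → S ν t = S lam t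
      · right
        apply S_ext
        intro ℓ
        rcases hsand ℓ with h | ⟨h1, h2, h3⟩
        · exact h
        · exact hC ℓ h1 h2
      · left
        push_neg at hC
        obtain ⟨t1, ht1a, ht1b, ht1c⟩ := hC
        have hf1 : S ν t1 + 1 = S lam t1 := by
          rcases hsand t1 with h | ⟨_, _, h⟩
          · exact absurd h ht1c
          · exact h
        have hall : ∀ t, j < t → t ≤ k → S ν t + 1 = S lam t := by
          intro t hta htb
          by_contra hft
          have hf0 : S ν t = S lam t := by
            rcases hsand t with h | ⟨_, _, h⟩
            · exact h
            · exact absurd h hft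
          have htne : t ≠ t1 := by
            intro h; rw [h] at hf0; omega
          have hk2 : j + 2 ≤ k := by omega
          have hcnd : lam k + 2 = lam j := by
            rcases hcond with h | h
            · omega
            · exact h
          have hint : ∀ i, j < i → i < k → lam i = lam k + 1 := by
            intro i h1 h2
            have e1 : mu i = lam i := heq i (by omega) (by omega)
            have e2 : mu i ≤ mu j := hmuanti (by omega : j ≤ i)
            have e3 : mu k ≤ mu i := hmuanti (by omega : i ≤ k)
            omega
          by_cases hf : S ν (j + 1) = S lam (j + 1)
          · -- f(j+1) = 0
            have ht1j : j + 2 ≤ t1 := by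
              rcases eq_or_ne t1 (j + 1) with h | h
              · rw [h] at hf1; omega
              · omega
            have hex0 : ∃ s, j + 2 ≤ s ∧ s ≤ k ∧ S ν s + 1 = S lam s :=
              ⟨t1, ht1j, ht1b, hf1⟩
            obtain ⟨a, ⟨ha1, ha2, ha3⟩, hamin⟩ :
                ∃ a, (j + 2 ≤ a ∧ a ≤ k ∧ S ν a + 1 = S lam a) ∧
                  ∀ s, s < a → ¬(j + 2 ≤ s ∧ s ≤ k ∧ S ν s + 1 = S lam s) :=
              ⟨Nat.find hex0, Nat.find_spec hex0, fun s h => Nat.find_min hex0 h⟩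
            have hprev0 : S ν (a - 1) = S lam (a - 1) := by
              rcases eq_or_ne (a - 1) (j + 1) with h | h
              · rw [h]; exact hf
              · rcases hsand (a - 1) with h' | ⟨hx1, hx2, h'⟩
                · exact h'
                · exact absurd ⟨by omega, by omega, h'⟩ (hamin (a - 1) (by omega))
            have hva : ν (a - 1) + 1 = lam k + 1 := by
              have e1 := S_succ ν (a - 1)
              have e2 := S_succ lam (a - 1)
              have e3 : a - 1 + 1 = a := by omega
              rw [e3] at e1 e2
              have e4 := hint (a - 1) (by omega) (by omega)
              omega
            have hwit : S ν (k + 1) = S lam (k + 1) := by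
              rcases hsand (k + 1) with h | ⟨_, h, _⟩
              · exact h
              · omega
            have hex1 : ∃ s, a + 1 ≤ s ∧ S ν s = S lam s := ⟨k + 1, by omega, hwit⟩
            obtain ⟨b, ⟨hb1, hb2⟩, hbmin⟩ :
                ∃ b, (a + 1 ≤ b ∧ S ν b = S lam b) ∧
                  ∀ s, s < b → ¬(a + 1 ≤ s ∧ S ν s = S lam s) :=
              ⟨Nat.find hex1, Nat.find_spec hex1, fun s h => Nat.find_min hex1 h⟩
            have hbk : b ≤ k + 1 := by
              by_contra hcb
              exact hbmin (k + 1) (by omega) ⟨by omega, hwit⟩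
            have hprev1 : S ν (b - 1) + 1 = S lam (b - 1) := by
              rcases eq_or_ne (b - 1) a with h | h
              · rw [h]; exact ha3
              · rcases hsand (b - 1) with h' | ⟨hx1, hx2, h'⟩
                · exact absurd ⟨by omega, h'⟩ (hbmin (b - 1) (by omega))
                · exact h'
            have hvb : lam (b - 1) + 1 = ν (b - 1) := by
              have e1 := S_succ ν (b - 1)
              have e2 := S_succ lam (b - 1)
              have e3 : b - 1 + 1 = b := by omega
              rw [e3] at e1 e2
              omega
            have e5 : lam k ≤ lam (b - 1) := hlm (by omega : b - 1 ≤ k)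
            have e6 : ν (b - 1) ≤ ν (a - 1) := hνa (by omega : a - 1 ≤ b - 1)
            omega
          · -- f(j+1) = 1
            have hfj1 : S ν (j + 1) + 1 = S lam (j + 1) := by
              rcases hsand (j + 1) with h | ⟨_, _, h⟩
              · exact absurd h hf
              · exact h
            have htj2 : j + 2 ≤ t := by
              rcases eq_or_ne t (j + 1) with h | h
              · rw [h] at hf0; omega
              · omega
            have hex1 : ∃ s, j + 2 ≤ s ∧ s ≤ k ∧ S ν s = S lam s := ⟨t, htj2, htb, hf0⟩
            obtain ⟨b, ⟨hb1, hb2, hb3⟩, hbmin⟩ :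
                ∃ b, (j + 2 ≤ b ∧ b ≤ k ∧ S ν b = S lam b) ∧
                  ∀ s, s < b → ¬(j + 2 ≤ s ∧ s ≤ k ∧ S ν s = S lam s) :=
              ⟨Nat.find hex1, Nat.find_spec hex1, fun s h => Nat.find_min hex1 h⟩
            have hprev : S ν (b - 1) + 1 = S lam (b - 1) := by
              rcases eq_or_ne (b - 1) (j + 1) with h | h
              · rw [h]; exact hfj1
              · rcases hsand (b - 1) with h' | ⟨hx1, hx2, h'⟩
                · exact absurd ⟨by omega, by omega, h'⟩ (hbmin (b - 1) (by omega))
                · exact h'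
            have hvb : ν (b - 1) = lam k + 2 := by
              have e1 := S_succ ν (b - 1)
              have e2 := S_succ lam (b - 1)
              have e3 : b - 1 + 1 = b := by omega
              rw [e3] at e1 e2
              have e4 := hint (b - 1) (by omega) (by omega)
              omega
            have hSjν : S ν j = S lam j := by
              rcases hsand j with h | ⟨h1, _, _⟩
              · exact h
              · omega
            have hvj : ν j + 1 = lam j := by
              have e1 := S_succ ν j
              have e2 := S_succ lam j
              omega
            have e6 : ν (b - 1) ≤ ν j := hνa (by omega : j ≤ b - 1)
            omega
        apply S_ext
        intro ℓ
        have h1 := hS ℓ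
        by_cases hc : j < ℓ ∧ ℓ ≤ k
        · have h2 := hall ℓ hc.1 hc.2
          rw [if_pos hc] at h1
          omega
        · rw [if_neg hc] at h1
          rcases hsand ℓ with h | ⟨h2, h3, _⟩
          · omega
          · exact absurd ⟨h2, h3⟩ hc
end

section
/- Suppose the grading is good for e, i.e. ad e : g_d → g_{d+2} is injective for every d ≤ −1 and surjective for every d ≥ −1. Then the centralizer z_g(e) := {x ∈ g : [e,x] = 0} is contained in ⊕_{d ≥ 0} g_d, and dim_ℂ z_g(e) = dim_ℂ g_0 + dim_ℂ g_1. In particular, any ℤ-grading satisfying the good-grading conditions GG1–GG3 also satisfies GG4 and GG6. -/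
open Module

/-- If submodules are independent, a finite sum of members, one from each, can only vanish
if each term vanishes. -/
lemma aux_sum_zero {R N ι : Type*} [Ring R] [AddCommGroup N] [Module R N]
    {p : ι → Submodule R N} (hind : iSupIndep p) (s : Finset ι) (y : ι → N)
    (hy : ∀ i ∈ s, y i ∈ p i) (hsum : ∑ i ∈ s, y i = 0) : ∀ i ∈ s, y i = 0 := by
  classical
  intro i hi
  have h1 : y i + ∑ j ∈ s.erase i, y j = 0 := by
    rw [Finset.add_sum_erase s y hi]; exact hsum
  have h2 : y i = - ∑ j ∈ s.erase i, y j := by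
    rw [eq_neg_iff_add_eq_zero]; exact h1
  have hmem : y i ∈ ⨆ j ≠ i, p j := by
    rw [h2]
    refine neg_mem (Submodule.sum_mem _ fun j hj => ?_)
    exact Submodule.mem_iSup_of_mem j (Submodule.mem_iSup_of_mem
      (Finset.ne_of_mem_erase hj) (hy j (Finset.mem_of_mem_erase hj)))
  exact Submodule.disjoint_def.mp (hind i) _ (hy i hi) hmem

lemma aux_finrank_sum {K V ι : Type*} [Field K] [AddCommGroup V] [Module K V]
    [FiniteDimensional K V] {p : ι → Submodule K V} (hind : iSupIndep p) (s : Finset ι) :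
    Module.finrank K ↑(⨆ i ∈ s, p i) = ∑ i ∈ s, Module.finrank K (p i) := by
  classical
  induction s using Finset.induction_on with
  | empty => simp
  | @insert a s ha ih =>
    rw [Finset.sum_insert ha, ← ih]
    have hsup : (⨆ i ∈ insert a s, p i) = p a ⊔ ⨆ i ∈ s, p i := by
      simp [iSup_or, iSup_sup_eq]
    have hdisj : Disjoint (p a) (⨆ i ∈ s, p i) := by
      refine (hind a).mono_right ?_
      refine iSup₂_le fun i hi => ?_
      exact le_iSup₂_of_le i (fun h => ha (h ▸ hi)) le_rfl
    rw [hsup]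
    have := Submodule.finrank_sup_add_finrank_inf_eq (p a) (⨆ i ∈ s, p i)
    rw [hdisj.eq_bot, finrank_bot] at this
    omega

/-- If the ℤ-grading of the finite-dimensional complex Lie algebra `L`
is good for `e ∈ g₂` (GG2 and GG3 hold), then the centralizer `z(e)` is contained in
`⊕_{d ≥ 0} g_d` (GG4) and `dim z(e) = dim g₀ + dim g₁` (GG6). -/
theorem stmt5 (L : Type*) [LieRing L] [LieAlgebra ℂ L] [FiniteDimensional ℂ L]
    (g : ℤ → Submodule ℂ L)
    (hdecomp : DirectSum.IsInternal g)
    (hfin : {d : ℤ | g d ≠ ⊥}.Finite)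
    (hbracket : ∀ c d : ℤ, ∀ x ∈ g c, ∀ y ∈ g d, ⁅x, y⁆ ∈ g (c + d))
    (e : L) (he : e ∈ g 2)
    (hinj : ∀ d : ℤ, d ≤ -1 → ∀ x ∈ g d, ⁅e, x⁆ = 0 → x = 0)
    (hsurj : ∀ d : ℤ, -1 ≤ d → ∀ y ∈ g (d + 2), ∃ x ∈ g d, ⁅e, x⁆ = y) :
    (∀ x : L, ⁅e, x⁆ = 0 → x ∈ ⨆ d ∈ {d : ℤ | 0 ≤ d}, g d)
    ∧ Module.finrank ℂ (LinearMap.ker (LieAlgebra.ad ℂ L e)) =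
        Module.finrank ℂ (g 0) + Module.finrank ℂ (g 1) := by
  classical
  have hindep : iSupIndep g := hdecomp.submodule_iSupIndep
  -- upper bound for the grading
  obtain ⟨b, hb⟩ : BddAbove {d : ℤ | g d ≠ ⊥} := hfin.bddAbove
  set N : ℤ := max b 2 with hN
  have hN2 : (2 : ℤ) ≤ N := le_max_right _ _
  have htop : ∀ d : ℤ, N < d → g d = ⊥ := by
    intro d hd
    by_contra h
    have : d ≤ b := hb h
    have : d ≤ N := this.trans (le_max_left _ _)
    omega
  -- key decomposition fact
  have key : ∀ x : L, ⁅e, x⁆ = 0 →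
      ∃ c : ℤ →₀ L, (∀ d, c d ∈ g d) ∧ (∀ d, ⁅e, c d⁆ = 0) ∧ ∑ d ∈ c.support, c d = x := by
    intro x hx
    have hx' : x ∈ ⨆ d, g d := by
      rw [hdecomp.submodule_iSup_eq_top]; trivial
    rw [Submodule.mem_iSup_iff_exists_finsupp] at hx'
    obtain ⟨c, hc1, hc2⟩ := hx'
    refine ⟨c, hc1, ?_, hc2⟩
    have hshift : iSupIndep (fun d : ℤ => g (d + 2)) :=
      hindep.comp (fun a b h => by omega)
    have hsum0 : ∑ d ∈ c.support, ⁅e, c d⁆ = 0 := by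
      have hms := (map_sum (LieAlgebra.ad ℂ L e) (fun d => c d) c.support).symm
      calc ∑ d ∈ c.support, ⁅e, c d⁆
          = (LieAlgebra.ad ℂ L e) (∑ d ∈ c.support, c d) := hms
        _ = ⁅e, x⁆ := by rw [show ∑ d ∈ c.support, c d = x from hc2]; rfl
        _ = 0 := hx
    have hz := aux_sum_zero hshift c.support (fun d => ⁅e, c d⁆)
      (fun d _ => by simpa [add_comm] using hbracket 2 d e he (c d) (hc1 d)) hsum0
    intro d
    by_cases hd : d ∈ c.support
    · exact hz d hd
    · simp [Finsupp.notMem_support_iff.mp hd]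
  -- Part 1
  have part1 : ∀ x : L, ⁅e, x⁆ = 0 → x ∈ ⨆ d ∈ {d : ℤ | 0 ≤ d}, g d := by
    intro x hx
    obtain ⟨c, hc1, hc2, hc3⟩ := key x hx
    rw [← hc3]
    refine Submodule.sum_mem _ fun d _ => ?_
    by_cases hd : 0 ≤ d
    · exact Submodule.mem_iSup_of_mem d (Submodule.mem_iSup_of_mem hd (hc1 d))
    · have : c d = 0 := hinj d (by omega) (c d) (hc1 d) (hc2 d)
      simp [this]
  refine ⟨part1, ?_⟩
  set f : L →ₗ[ℂ] L := LieAlgebra.ad ℂ L e with hf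
  have hfapp : ∀ x : L, f x = ⁅e, x⁆ := fun x => rfl
  set K : ℤ → Submodule ℂ L := fun d => g d ⊓ LinearMap.ker f with hK
  have hKindep : iSupIndep K := hindep.mono (fun d => inf_le_left)
  -- kernel as sup of K over Icc 0 N
  have hker_eq : LinearMap.ker f = ⨆ d ∈ Finset.Icc (0:ℤ) N, K d := by
    apply le_antisymm
    · intro x hx
      have hx0 : ⁅e, x⁆ = 0 := hx
      obtain ⟨c, hc1, hc2, hc3⟩ := key x hx0
      rw [← hc3]
      refine Submodule.sum_mem _ fun d _ => ?_
      by_cases hd : d ∈ Finset.Icc (0:ℤ) N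
      · refine Submodule.mem_iSup_of_mem d (Submodule.mem_iSup_of_mem hd ?_)
        exact ⟨hc1 d, by simpa [LinearMap.mem_ker, hfapp] using hc2 d⟩
      · rw [Finset.mem_Icc] at hd
        push_neg at hd
        rcases le_or_gt 0 d with h0 | h0
        · have hgb : g d = ⊥ := htop d (hd h0)
          have hcd : c d ∈ (⊥ : Submodule ℂ L) := hgb ▸ hc1 d
          rw [Submodule.mem_bot] at hcd
          simp [hcd]
        · have : c d = 0 := hinj d (by omega) (c d) (hc1 d) (hc2 d)
          simp [this]
    · exact iSup₂_le fun d _ => inf_le_right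
  -- rank-nullity in each degree
  have hrank : ∀ d : ℤ, 0 ≤ d →
      finrank ℂ (K d) + finrank ℂ (g (d + 2)) = finrank ℂ (g d) := by
    intro d hd
    set φ : (g d) →ₗ[ℂ] L := f ∘ₗ (g d).subtype with hφ
    have hrange : LinearMap.range φ = g (d + 2) := by
      apply le_antisymm
      · rintro _ ⟨⟨x, hx⟩, rfl⟩
        simpa [φ, hfapp, add_comm] using hbracket 2 d e he x hx
      · intro y hy
        obtain ⟨x, hx, hxy⟩ := hsurj d (by omega) y hy
        exact ⟨⟨x, hx⟩, by simp [φ, hfapp, hxy]⟩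
    have hkerφ : LinearMap.ker φ = (K d).comap (g d).subtype := by
      ext v
      simp [φ, K, LinearMap.mem_ker, v.2]
    have heq : finrank ℂ (LinearMap.ker φ) = finrank ℂ (K d) := by
      rw [hkerφ]
      exact LinearEquiv.finrank_eq (Submodule.comapSubtypeEquivOfLe inf_le_left)
    have := LinearMap.finrank_range_add_finrank_ker φ
    rw [hrange, heq] at this
    omega
  -- assemble
  have hdim : finrank ℂ (LinearMap.ker f) = ∑ d ∈ Finset.Icc (0:ℤ) N, finrank ℂ (K d) := by
    rw [hker_eq]
    exact aux_finrank_sum hKindep _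
  have hsum2 : (∑ d ∈ Finset.Icc (0:ℤ) N, finrank ℂ (K d))
      + ∑ d ∈ Finset.Icc (0:ℤ) N, finrank ℂ (g (d + 2))
      = ∑ d ∈ Finset.Icc (0:ℤ) N, finrank ℂ (g d) := by
    rw [← Finset.sum_add_distrib]
    exact Finset.sum_congr rfl fun d hd => hrank d (Finset.mem_Icc.mp hd).1
  have hshift_sum : ∑ d ∈ Finset.Icc (0:ℤ) N, finrank ℂ (g (d + 2))
      = ∑ d ∈ Finset.Icc (2:ℤ) (N + 2), finrank ℂ (g d) := by
    have hIcc : Finset.Icc (2:ℤ) (N + 2) = (Finset.Icc (0:ℤ) N).map (addRightEmbedding 2) := by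
      rw [Finset.map_add_right_Icc]; norm_num
    rw [hIcc, Finset.sum_map]
    rfl
  have htail : ∑ d ∈ Finset.Icc (2:ℤ) (N + 2), finrank ℂ (g d)
      = ∑ d ∈ Finset.Icc (2:ℤ) N, finrank ℂ (g d) := by
    symm
    apply Finset.sum_subset
    · intro d hd; rw [Finset.mem_Icc] at *; omega
    · intro d hd hnd
      rw [Finset.mem_Icc] at hd
      rw [Finset.mem_Icc] at hnd
      push_neg at hnd
      have : g d = ⊥ := htop d (by omega)
      simp [this]
  have hsplit : ∑ d ∈ Finset.Icc (0:ℤ) N, finrank ℂ (g d)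
      = (finrank ℂ (g 0) + finrank ℂ (g 1)) + ∑ d ∈ Finset.Icc (2:ℤ) N, finrank ℂ (g d) := by
    have hunion : Finset.Icc (0:ℤ) N = Finset.Icc (0:ℤ) 1 ∪ Finset.Icc (2:ℤ) N := by
      ext d; simp only [Finset.mem_Icc, Finset.mem_union]; omega
    have hdisj : Disjoint (Finset.Icc (0:ℤ) 1) (Finset.Icc (2:ℤ) N) := by
      rw [Finset.disjoint_left]
      intro d h1 h2
      rw [Finset.mem_Icc] at h1 h2
      omega
    have h01 : Finset.Icc (0:ℤ) 1 = {0, 1} := by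
      ext d
      simp only [Finset.mem_Icc, Finset.mem_insert, Finset.mem_singleton]
      omega
    rw [hunion, Finset.sum_union hdisj, h01, Finset.sum_insert (by simp),
      Finset.sum_singleton]
  rw [hdim]
  rw [hshift_sum, htail, hsplit] at hsum2
  omega
end

section
/- The matrix e_2 is nilpotent of Jordan type λ: for every p ≥ 0 one has rank(e_2^p) = Σ_{r=1}^{k} max(λ_r − p, 0). In particular, the nilpotent orbit of e_2 corresponds to the partition λ, which covers the partition μ of e_1 in the dominance order. -/
open Matrix

/-- The boxes of the right-aligned Young diagram of `μ` (0-based: box `⟨r, s⟩`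
corresponds to the box in row `r+1`, `s+1`-th from the right end of its row). -/
abbrev Box (k : ℕ) (μ : Fin k → ℕ) := (r : Fin k) × Fin (μ r)

/-- The nilpotent `e₁` of Jordan type `μ`, sending `b_{r,s} ↦ b_{r,s+1}`. -/
noncomputable def e1 (k : ℕ) (μ : Fin k → ℕ) : Matrix (Box k μ) (Box k μ) ℂ :=
  Matrix.of fun t u => if t.1 = u.1 ∧ t.2.val = u.2.val + 1 then 1 else 0

/-- The nilpotent `e₂ = e₁ + Σ_{s=1}^{μ_j} E_{(i,s),(j,s)}`. -/
noncomputable def e2 (k : ℕ) (μ : Fin k → ℕ) (i j : Fin k) : Matrix (Box k μ) (Box k μ) ℂ :=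
  e1 k μ + Matrix.of fun t u => if t.1 = i ∧ u.1 = j ∧ t.2.val = u.2.val then 1 else 0

/-- `E_m := Σ_{r=i}^{j−m} Σ_{s=1}^{μ_{r+m}} E_{(r+m,s),(r,s)}`. -/
noncomputable def Em (k : ℕ) (μ : Fin k → ℕ) (i j : Fin k) (m : ℕ) :
    Matrix (Box k μ) (Box k μ) ℂ :=
  Matrix.of fun t u =>
    if i ≤ u.1 ∧ t.1 ≤ j ∧ t.1.val = u.1.val + m ∧ t.2.val = u.2.val then 1 else 0

/-- `m₁ := span{E_{t,u} : s_t < s_u}`. -/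
noncomputable def m1 (k : ℕ) (μ : Fin k → ℕ) : Submodule ℂ (Matrix (Box k μ) (Box k μ) ℂ) :=
  Submodule.span ℂ
    {x | ∃ t u : Box k μ, t.2.val < u.2.val ∧ x = Matrix.single t u 1}

/-- `k := span{E_1, …, E_{j−i}}`. -/
noncomputable def fk (k : ℕ) (μ : Fin k → ℕ) (i j : Fin k) :
    Submodule ℂ (Matrix (Box k μ) (Box k μ) ℂ) :=
  Submodule.span ℂ {x | ∃ m : ℕ, 1 ≤ m ∧ m ≤ j.val - i.val ∧ x = Em k μ i j m}

/-- `m₂ := m₁ + k`. -/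
noncomputable def m2 (k : ℕ) (μ : Fin k → ℕ) (i j : Fin k) :
    Submodule ℂ (Matrix (Box k μ) (Box k μ) ℂ) :=
  m1 k μ ⊔ fk k μ i j

/-- The covering partition `λ`. -/
def lam (k : ℕ) (μ : Fin k → ℕ) (i j : Fin k) : Fin k → ℕ :=
  fun r => if r = i then μ i + 1 else if r = j then μ j - 1 else μ r

/-- `χ_a(x) = Tr(e_a x)`. -/
noncomputable def chi (k : ℕ) (μ : Fin k → ℕ) (ea x : Matrix (Box k μ) (Box k μ) ℂ) : ℂ :=
  (ea * x).trace

/-!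
The matrix `e₂` only couples rows `i` and `j`. Since `μ_j ≤ μ_i`, the vectors
`e₂^s b_{j,1} = b_{j,s+1} + min(s, μ_j) b_{i,s}` (`0 ≤ s ≤ μ_i`) form a Jordan chain of length
`μ_i + 1 = λ_i`, and the chain generated by `(μ_j − 1) b_{i,1} − b_{j,2}` is one of
length `μ_j − 1 = λ_j`. With the untouched rows they form a basis indexed by the boxes of `λ` in
which `e₂` acts as the standard nilpotent of type `λ`, so `e₂` is similar to `e1 k λ`, whose
`p`-th power visibly has rank `Σ_r (λ_r − p)`. The inverse change of basis divides by `μ_j`.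
-/

section RankLemmas

variable {m n R : Type*} [Fintype m] [Fintype n] [DecidableEq m]
  [CommRing R] [StrongRankCondition R]

theorem Matrix.rank_eq_card_of_col_eq_single [Nontrivial R] (N : Matrix m n R) (P : n → Prop)
    [DecidablePred P] (g : {u // P u} → m) (hg : Function.Injective g)
    (hcol : ∀ u : {u // P u}, N.col u = Pi.single (g u) 1) (hzero : ∀ u, ¬ P u → N.col u = 0) :
    N.rank = Fintype.card {u // P u} := by
  have hspan : Submodule.span R (Set.range N.col) =
      Submodule.span R (Set.range (Pi.basisFun R m ∘ g)) := by
    apply le_antisymm <;> rw [Submodule.span_le]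
    · rintro _ ⟨u, rfl⟩
      by_cases hu : P u
      · exact Submodule.subset_span ⟨⟨u, hu⟩, by simp [hcol ⟨u, hu⟩]⟩
      · rw [hzero u hu]
        exact Submodule.zero_mem _
    · rintro _ ⟨u, rfl⟩
      exact Submodule.subset_span ⟨u, by simp [hcol u]⟩
  rw [rank_eq_finrank_span_cols, hspan]
  exact finrank_span_eq_card ((Pi.basisFun R m).linearIndependent.comp g hg)

theorem Matrix.rank_pow_eq_of_mul_eq_mul [DecidableEq n] {A : Matrix m m R} {B : Matrix n n R}
    {P : Matrix m n R} {Q : Matrix n m R} (hPQ : P * Q = 1) (hQP : Q * P = 1)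
    (h : A * P = P * B) (p : ℕ) : (A ^ p).rank = (B ^ p).rank := by
  have hpow : A ^ p * P = P * B ^ p := by
    induction p with
    | zero => simp
    | succ p ih =>
      rw [pow_succ, Matrix.mul_assoc, h, ← Matrix.mul_assoc, ih, Matrix.mul_assoc, ← pow_succ]
  have hA : A ^ p = P * B ^ p * Q := by rw [← hpow, Matrix.mul_assoc, hPQ, Matrix.mul_one]
  have hB : B ^ p = Q * A ^ p * P := by
    rw [Matrix.mul_assoc, hpow, ← Matrix.mul_assoc, hQP, Matrix.one_mul]
  apply le_antisymm
  · rw [hA]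
    exact (rank_mul_le_left _ _).trans (rank_mul_le_right _ _)
  · rw [hB]
    exact (rank_mul_le_left _ _).trans (rank_mul_le_right _ _)

end RankLemmas

section Boxes

variable {k : ℕ}

/-- The basis vector `b_{r,s}` of `ℂ^B`, read as `0` when `s` is past the end of row `r`. -/
noncomputable def boxVec (μ : Fin k → ℕ) (r : Fin k) (s : ℕ) : Box k μ → ℂ :=
  if h : s < μ r then Pi.single ⟨r, ⟨s, h⟩⟩ 1 else 0

variable (μ : Fin k → ℕ)

theorem boxVec_apply (r : Fin k) (s : ℕ) (t : Box k μ) :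
    boxVec μ r s t = if t.1 = r ∧ (t.2 : ℕ) = s then 1 else 0 := by
  obtain ⟨a, b⟩ := t
  unfold boxVec
  split_ifs with h h' h'
  · obtain ⟨rfl, rfl⟩ := h'
    simp
  · rw [Pi.single_apply, if_neg]
    rintro ⟨⟩
    exact h' ⟨rfl, rfl⟩
  · obtain ⟨rfl, rfl⟩ := h'
    exact absurd b.2 h
  · rfl

theorem boxVec_of_le {r : Fin k} {s : ℕ} (h : μ r ≤ s) : boxVec μ r s = 0 :=
  dif_neg h.not_gt

theorem boxVec_eq_single (t : Box k μ) : boxVec μ t.1 t.2 = Pi.single t 1 :=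
  dif_pos t.2.2

theorem mulVec_boxVec {m : Type*} (M : Matrix m (Box k μ) ℂ) (r : Fin k) (s : ℕ) :
    M *ᵥ boxVec μ r s = if h : s < μ r then M.col ⟨r, ⟨s, h⟩⟩ else 0 := by
  unfold boxVec
  split_ifs
  · exact mulVec_single_one M _
  · exact mulVec_zero M

theorem e1_mulVec_boxVec (r : Fin k) (s : ℕ) : e1 k μ *ᵥ boxVec μ r s = boxVec μ r (s + 1) := by
  rw [mulVec_boxVec]
  split_ifs with h
  · funext t
    simp [e1, boxVec_apply]
  · rw [boxVec_of_le μ (by omega)]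

theorem e1_pow_mulVec_boxVec (p : ℕ) (r : Fin k) (s : ℕ) :
    (e1 k μ) ^ p *ᵥ boxVec μ r s = boxVec μ r (s + p) := by
  induction p generalizing s with
  | zero => simp
  | succ p ih => rw [pow_succ, ← mulVec_mulVec, e1_mulVec_boxVec, ih, add_assoc, add_comm 1]

theorem card_box_add_lt (p : ℕ) :
    Fintype.card {u : Box k μ // (u.2 : ℕ) + p < μ u.1} = ∑ r, (μ r - p) := by
  rw [Fintype.card_subtype, Finset.card_filter, ← Finset.univ_sigma_univ, Finset.sum_sigma]
  refine Finset.sum_congr rfl fun r _ => ?_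
  rw [← Finset.card_filter]
  calc (Finset.univ.filter fun s : Fin (μ r) => (s : ℕ) + p < μ r).card
        = (Finset.univ.filter fun s : Fin (μ r) => (s : ℕ) < μ r - p).card := by
        congr 1; ext s; simp only [Finset.mem_filter, Finset.mem_univ, true_and]; omega
    _ = μ r - p := by rw [Fin.card_filter_val_lt]; omega

theorem rank_e1_pow (p : ℕ) : ((e1 k μ) ^ p).rank = ∑ r, (μ r - p) := by
  have hcol (u : Box k μ) : ((e1 k μ) ^ p).col u = boxVec μ u.1 (u.2 + p) := by
    rw [← mulVec_single_one, ← boxVec_eq_single, e1_pow_mulVec_boxVec]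
  rw [rank_eq_card_of_col_eq_single _ (fun u : Box k μ => u.2 + p < μ u.1)
    (fun u => ⟨u.1.1, ⟨u.1.2 + p, u.2⟩⟩) ?inj (fun u => by rw [hcol, boxVec]; simp [u.2])
    (fun u hu => by rw [hcol, boxVec_of_le μ (not_lt.mp hu)])]
  case inj =>
    rintro ⟨⟨a, b⟩, hb⟩ ⟨⟨a', b'⟩, hb'⟩ h
    obtain ⟨rfl, h⟩ := Sigma.mk.inj_iff.mp h
    simp only [heq_eq_eq, Fin.mk.injEq, add_left_inj] at h
    exact Subtype.ext (Sigma.ext rfl (heq_of_eq (Fin.ext h)))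
  exact card_box_add_lt μ p

end Boxes

section JordanBasis

variable {k : ℕ} (μ : Fin k → ℕ) (i j : Fin k)

theorem e2_mulVec_boxVec (r : Fin k) (s : ℕ) :
    e2 k μ i j *ᵥ boxVec μ r s =
      boxVec μ r (s + 1) + if r = j ∧ s < μ j then boxVec μ i s else 0 := by
  rw [e2, add_mulVec, e1_mulVec_boxVec, mulVec_boxVec]
  congr 1
  split_ifs with h h' h'
  · funext t
    simp [boxVec_apply, h'.1]
  · funext t
    simp only [col_apply, of_apply, Pi.zero_apply, ite_eq_right_iff, one_ne_zero]
    rintro ⟨-, rfl, -⟩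
    exact h' ⟨rfl, h⟩
  · exact absurd h'.2 (h'.1 ▸ h)
  · rfl

/-- The Jordan basis of `e₂`, indexed by the boxes of `λ`. At `s = 0` the truncated `s - 1` is
harmless because its coefficient `min s μ_j` vanishes. -/
noncomputable def jordanVec (r : Fin k) (s : ℕ) : Box k μ → ℂ :=
  if r = i then boxVec μ j s + ((min s (μ j) : ℕ) : ℂ) • boxVec μ i (s - 1)
  else if r = j then ((μ j - 1 - s : ℕ) : ℂ) • boxVec μ i s - boxVec μ j (s + 1)
  else boxVec μ r s

variable {μ i j}

theorem e2_mulVec_jordanVec (hij : i ≠ j) (r : Fin k) (s : ℕ) :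
    e2 k μ i j *ᵥ jordanVec μ i j r s = jordanVec μ i j r (s + 1) := by
  unfold jordanVec
  split_ifs with hri hrj
  · have hshift : ((min s (μ j) : ℕ) : ℂ) • boxVec μ i (s - 1 + 1) =
        ((min s (μ j) : ℕ) : ℂ) • boxVec μ i s := by
      rcases s with _ | s <;> simp
    simp only [mulVec_add, mulVec_smul, e2_mulVec_boxVec, hij, false_and, if_false, true_and,
      add_zero, hshift, add_assoc, Nat.add_sub_cancel]
    congr 1
    split_ifs with hs
    · rw [min_eq_left hs.le, min_eq_left hs]
      push_cast
      module
    · rw [min_eq_right (by omega), min_eq_right (by omega), zero_add]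
  · simp only [mulVec_sub, mulVec_smul, e2_mulVec_boxVec, hij, false_and, if_false, true_and,
      add_zero]
    split_ifs with hs
    · rw [show μ j - 1 - s = μ j - 1 - (s + 1) + 1 by omega]
      push_cast
      module
    · rw [show μ j - 1 - s = 0 by omega, show μ j - 1 - (s + 1) = 0 by omega]
      simp
  · simp [e2_mulVec_boxVec, hrj]

theorem jordanVec_of_le (hji : μ j ≤ μ i) {r : Fin k} {s : ℕ}
    (hs : lam k μ i j r ≤ s) : jordanVec μ i j r s = 0 := by
  unfold jordanVec
  unfold lam at hs
  split_ifs at hs ⊢ with hri hrj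
  · rw [boxVec_of_le μ (by omega), boxVec_of_le μ (show μ i ≤ s - 1 by omega), smul_zero,
      add_zero]
  · rw [show μ j - 1 - s = 0 by omega, boxVec_of_le μ (show μ j ≤ s + 1 by omega)]
    simp
  · exact boxVec_of_le μ hs

variable (μ i j) in
noncomputable def jordanBasisMatrix : Matrix (Box k μ) (Box k (lam k μ i j)) ℂ :=
  Matrix.of fun t v => jordanVec μ i j v.1 v.2 t

theorem jordanBasisMatrix_mulVec_boxVec (hji : μ j ≤ μ i) (r : Fin k) (s : ℕ) :
    jordanBasisMatrix μ i j *ᵥ boxVec (lam k μ i j) r s = jordanVec μ i j r s := by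
  rw [mulVec_boxVec]
  split_ifs with h
  · rfl
  · exact (jordanVec_of_le hji (not_lt.mp h)).symm

theorem e2_mul_jordanBasisMatrix (hij : i ≠ j) (hji : μ j ≤ μ i) :
    e2 k μ i j * jordanBasisMatrix μ i j = jordanBasisMatrix μ i j * e1 k (lam k μ i j) := by
  refine ext_of_mulVec_single fun v => ?_
  rw [← boxVec_eq_single, ← mulVec_mulVec, ← mulVec_mulVec, e1_mulVec_boxVec,
    jordanBasisMatrix_mulVec_boxVec hji, jordanBasisMatrix_mulVec_boxVec hji,
    e2_mulVec_jordanVec hij]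

variable (μ i j) in
noncomputable def jordanCoord (r : Fin k) (s : ℕ) : Box k (lam k μ i j) → ℂ :=
  if r = i then (μ j : ℂ)⁻¹ • (boxVec (lam k μ i j) i (s + 1) + boxVec (lam k μ i j) j s)
  else if r = j then (μ j : ℂ)⁻¹ •
    (((μ j - s : ℕ) : ℂ) • boxVec (lam k μ i j) i s - (s : ℂ) • boxVec (lam k μ i j) j (s - 1))
  else boxVec (lam k μ i j) r s

variable (μ i j) in
noncomputable def jordanCoordMatrix : Matrix (Box k (lam k μ i j)) (Box k μ) ℂ :=
  Matrix.of fun v t => jordanCoord μ i j t.1 t.2 v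

theorem jordanBasisMatrix_mulVec_jordanCoord (hij : i ≠ j) (hji : μ j ≤ μ i) (hj : 0 < μ j)
    {r : Fin k} {s : ℕ} (hs : s < μ r) :
    jordanBasisMatrix μ i j *ᵥ jordanCoord μ i j r s = boxVec μ r s := by
  have hb : (μ j : ℂ) ≠ 0 := by exact_mod_cast hj.ne'
  unfold jordanCoord
  split_ifs with hri hrj
  · subst hri
    rw [mulVec_smul, mulVec_add, jordanBasisMatrix_mulVec_boxVec hji,
      jordanBasisMatrix_mulVec_boxVec hji, inv_smul_eq_iff₀ hb]
    have key : ((min (s + 1) (μ j) : ℕ) : ℂ) + ((μ j - 1 - s : ℕ) : ℂ) = μ j := by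
      exact_mod_cast (show min (s + 1) (μ j) + (μ j - 1 - s) = μ j by omega)
    simp only [jordanVec, ↓reduceIte, if_neg (Ne.symm hij), Nat.add_sub_cancel]
    rw [← key]
    module
  · subst hrj
    rw [mulVec_smul, mulVec_sub, mulVec_smul, mulVec_smul,
      jordanBasisMatrix_mulVec_boxVec hji, jordanBasisMatrix_mulVec_boxVec hji,
      inv_smul_eq_iff₀ hb]
    rcases s with _ | s
    · simp [jordanVec]
    · simp only [jordanVec, ↓reduceIte, if_neg (Ne.symm hij), Nat.add_sub_cancel,
        min_eq_left hs.le, show μ r - 1 - s = μ r - (s + 1) by omega]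
      push_cast [Nat.cast_sub hs.le]
      module
  · rw [jordanBasisMatrix_mulVec_boxVec hji, jordanVec, if_neg hri, if_neg hrj]

theorem jordanBasisMatrix_mul_jordanCoordMatrix (hij : i ≠ j) (hji : μ j ≤ μ i)
    (hj : 0 < μ j) :
    jordanBasisMatrix μ i j * jordanCoordMatrix μ i j = 1 := by
  refine ext_of_mulVec_single fun t => ?_
  rw [← mulVec_mulVec, mulVec_single_one, one_mulVec, ← boxVec_eq_single]
  exact jordanBasisMatrix_mulVec_jordanCoord hij hji hj t.2.2

theorem sum_lam (hij : i ≠ j) (hj : 0 < μ j) : ∑ r, lam k μ i j r = ∑ r, μ r := by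
  have h (r : Fin k) :
      lam k μ i j r + (if r = j then 1 else 0) = μ r + (if r = i then 1 else 0) := by
    unfold lam
    split_ifs with hri hrj <;> subst_vars <;> omega
  have := Fintype.sum_congr _ _ h
  simp only [Finset.sum_add_distrib, Finset.sum_ite_eq', Finset.mem_univ, if_true] at this
  omega

end JordanBasis

theorem stmt7_general
    (k : ℕ) (μ : Fin k → ℕ)
    (hpos : ∀ r, 0 < μ r) (hanti : Antitone μ)
    (i j : Fin k) (hij : i < j)
    (p : ℕ) :
    ((e2 k μ i j) ^ p).rank = ∑ r : Fin k, (lam k μ i j r - p) := by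
  have hne : i ≠ j := hij.ne
  have hji : μ j ≤ μ i := hanti hij.le
  have hcard : Box k μ ≃ Box k (lam k μ i j) :=
    Fintype.equivOfCardEq (by simp [sum_lam hne (hpos j)])
  have hPQ := jordanBasisMatrix_mul_jordanCoordMatrix hne hji (hpos j)
  have hQP := (mul_eq_one_comm_of_equiv hcard).mp hPQ
  rw [rank_pow_eq_of_mul_eq_mul hPQ hQP (e2_mul_jordanBasisMatrix hne hji), rank_e1_pow]

/-- `e₂` is nilpotent of Jordan type `λ`:
`rank(e₂^p) = Σ_r max(λ_r − p, 0)` for all `p ≥ 0`. -/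
theorem stmt7
    (k : ℕ) (n : ℕ) (μ : Fin k → ℕ)
    (hpos : ∀ r, 0 < μ r) (hanti : Antitone μ)
    (hn : ∑ r : Fin k, μ r = n)
    (i j : Fin k) (hij : i < j)
    (hi : ∀ r, r < i → μ i < μ r)
    (hj : ∀ r, j < r → μ r < μ j)
    (hcase : (j : ℕ) = (i : ℕ) + 1 ∨ μ i = μ j)
    (p : ℕ) :
    ((e2 k μ i j) ^ p).rank = ∑ r : Fin k, (lam k μ i j r - p) :=
  stmt7_general k μ hpos hanti i j hij p
end

section
/- One has [E_m, E_{m'}] = 0 for all 1 ≤ m, m' ≤ j − i, so k is an abelian Lie subalgebra; m_1 is a Lie subalgebra; and [m_2, m_2] ⊆ m_1. Consequently m_1 is a Lie ideal of m_2, the sum m_2 = m_1 ⊕ k is direct, and m_2 is the semidirect product of Lie algebras m_1 ⋊ k. -/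
/-!
Write `s_t` for the position of the box `t` in its row. Then `m₁` is exactly the space of
matrices supported on pairs `(t, u)` with `s_t < s_u`, each `E_m` is supported on `s_t = s_u`,
so `m₂` lies in the algebra of matrices supported on `s_t ≤ s_u`, in which `m₁` is a two-sided
ideal. Hence `[m₂, m₁] ⊆ m₁`, the supports of `m₁` and `k` are disjoint, and `[m₂, m₂] ⊆ m₁`
reduces to `[k, k] = 0`, which holds because `E_m E_{m'} = E_{m+m'}` when `μ` is antitone.
-/

open Matrix

namespace Matrix

variable {n α : Type*}

def supportedOn [Semiring α] (P : n → n → Prop) : Submodule α (Matrix n n α) where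
  carrier := {A | ∀ a b, ¬ P a b → A a b = 0}
  add_mem' hA hB a b h := by simp [hA a b h, hB a b h]
  zero_mem' _ _ _ := rfl
  smul_mem' c A hA a b h := by simp [hA a b h]

section Semiring

variable [Semiring α] {P Q R : n → n → Prop}

theorem supportedOn_inf_supportedOn_eq_bot (h : ∀ a b, P a b → Q a b → False) :
    supportedOn P ⊓ supportedOn Q = (⊥ : Submodule α (Matrix n n α)) := by
  refine eq_bot_iff.2 fun A ⟨hP, hQ⟩ => (Submodule.mem_bot α).2 (ext fun a b => ?_)
  by_cases hab : P a b
  · exact hQ a b (h a b hab)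
  · exact hP a b hab

theorem mul_mem_supportedOn [Fintype n] (hPQ : ∀ a b c, P a b → Q b c → R a c)
    {A B : Matrix n n α} (hA : A ∈ supportedOn P) (hB : B ∈ supportedOn Q) :
    A * B ∈ supportedOn R := by
  refine fun a c hac => Finset.sum_eq_zero fun b _ => ?_
  by_cases hab : P a b
  · exact mul_eq_zero_of_right _ (hB b c fun hbc => hac (hPQ a b c hab hbc))
  · exact mul_eq_zero_of_left (hA a b hab) _

end Semiring

theorem commutator_mem_supportedOn_lt [Fintype n] [Ring α] {β : Type*} [Preorder β]
    {f : n → β} {A B : Matrix n n α} (hA : A ∈ supportedOn fun a b => f a ≤ f b)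
    (hB : B ∈ supportedOn fun a b => f a < f b) :
    A * B - B * A ∈ supportedOn (α := α) fun a b => f a < f b :=
  Submodule.sub_mem _
    (mul_mem_supportedOn (Q := fun a b => f a < f b) (fun _ _ _ => lt_of_le_of_lt) hA hB)
    (mul_mem_supportedOn (Q := fun a b => f a ≤ f b) (fun _ _ _ => lt_of_lt_of_le) hB hA)

end Matrix

theorem commute_of_mem_span {R A : Type*} [CommSemiring R] [Semiring A] [Algebra R A]
    {s : Set A} (hs : ∀ a ∈ s, ∀ b ∈ s, Commute a b) {x y : A}
    (hx : x ∈ Submodule.span R s) (hy : y ∈ Submodule.span R s) : Commute x y :=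
  Algebra.commute_of_mem_adjoin_of_forall_mem_commute (Algebra.span_le_adjoin R s hy)
    fun b hb => (Algebra.commute_of_mem_adjoin_of_forall_mem_commute
      (Algebra.span_le_adjoin R s hx) fun a ha => hs b hb a ha).symm

open Matrix

section YoungDiagram

variable {k : ℕ} {μ : Fin k → ℕ} {i j : Fin k}

theorem Box.ext_val {a b : Box k μ} (h₁ : (a.1 : ℕ) = b.1) (h₂ : (a.2 : ℕ) = b.2) : a = b :=
  Sigma.ext (Fin.ext h₁) ((Fin.heq_ext_iff (by rw [Fin.ext h₁])).2 h₂)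

theorem m1_eq_supportedOn : m1 k μ = supportedOn fun t u => (t.2 : ℕ) < u.2 := by
  apply le_antisymm
  · refine Submodule.span_le.2 ?_
    rintro _ ⟨t, u, htu, rfl⟩ a b hab
    rw [single_apply_of_ne]
    rintro ⟨rfl, rfl⟩
    exact hab htu
  · intro A hA
    rw [matrix_eq_sum_single A]
    refine Submodule.sum_mem _ fun t _ => Submodule.sum_mem _ fun u _ => ?_
    by_cases htu : (t.2 : ℕ) < u.2
    · rw [show single t u (A t u) = A t u • single t u 1 by simp]
      exact Submodule.smul_mem _ _ (Submodule.subset_span ⟨t, u, htu, rfl⟩)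
    · simp [hA t u htu]

theorem Em_mem_supportedOn (m : ℕ) :
    Em k μ i j m ∈ supportedOn fun t u => (t.2 : ℕ) = u.2 := fun _ _ h =>
  if_neg fun hc => h hc.2.2.2

theorem fk_le_supportedOn : fk k μ i j ≤ supportedOn fun t u => (t.2 : ℕ) = u.2 :=
  Submodule.span_le.2 fun _ ⟨_, _, _, hx⟩ => hx ▸ Em_mem_supportedOn _

theorem m2_le_supportedOn : m2 k μ i j ≤ supportedOn fun t u => (t.2 : ℕ) ≤ u.2 :=
  sup_le (m1_eq_supportedOn.trans_le fun _ hA a b h => hA a b (h ∘ le_of_lt))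
    (fk_le_supportedOn.trans fun _ hA a b h => hA a b (h ∘ le_of_eq))

theorem m1_inf_fk : m1 k μ ⊓ fk k μ i j = ⊥ :=
  eq_bot_iff.2 <| (inf_le_inf m1_eq_supportedOn.le fk_le_supportedOn).trans
    (supportedOn_inf_supportedOn_eq_bot fun _ _ h₁ h₂ => h₁.ne h₂).le

theorem commutator_mem_m1 {x y : Matrix (Box k μ) (Box k μ) ℂ} (hx : x ∈ m2 k μ i j)
    (hy : y ∈ m1 k μ) : x * y - y * x ∈ m1 k μ := by
  rw [m1_eq_supportedOn] at hy ⊢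
  exact commutator_mem_supportedOn_lt (m2_le_supportedOn hx) hy

/-- `E_{m'}` followed by `E_m` moves `(r, s)` through `(r + m', s)`, a box because `μ` is
antitone. -/
theorem Em_mul_Em (hμ : Antitone μ) (m m' : ℕ) :
    Em k μ i j m * Em k μ i j m' = Em k μ i j (m + m') := by
  ext t u
  simp only [mul_apply, Em, of_apply, mul_ite, mul_one, mul_zero]
  by_cases hC : i ≤ u.1 ∧ t.1 ≤ j ∧ (t.1 : ℕ) = u.1 + (m + m') ∧ (t.2 : ℕ) = u.2
  · obtain ⟨hiu, htj, h₁, h₂⟩ := hC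
    obtain ⟨r, hr⟩ : ∃ r : Fin k, (r : ℕ) = u.1 + m' := ⟨⟨u.1 + m', by omega⟩, rfl⟩
    have hμr : μ t.1 ≤ μ r := hμ (Fin.le_def.2 (by omega))
    obtain ⟨v, hv₁, hv₂⟩ : ∃ v : Box k μ, v.1 = r ∧ (v.2 : ℕ) = u.2 :=
      ⟨⟨r, u.2, by have := t.2.isLt; omega⟩, rfl, rfl⟩
    rw [Fin.le_def] at hiu htj
    rw [if_pos ⟨Fin.le_def.2 hiu, Fin.le_def.2 htj, h₁, h₂⟩, Finset.sum_eq_single v]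
    · rw [if_pos ⟨Fin.le_def.2 hiu, Fin.le_def.2 (by omega), by omega, hv₂⟩,
        if_pos ⟨Fin.le_def.2 (by omega), Fin.le_def.2 htj, by omega, by omega⟩]
    · intro w _ hw
      exact if_neg fun hB => hw (Box.ext_val (by omega) (by omega))
    · simp
  · rw [if_neg hC]
    refine Finset.sum_eq_zero fun w _ => ?_
    split_ifs with hB hA
    · exact absurd ⟨hB.1, hA.2.1, by omega, by omega⟩ hC
    all_goals rfl

theorem commute_Em (hμ : Antitone μ) (m m' : ℕ) : Commute (Em k μ i j m) (Em k μ i j m') := by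
  rw [Commute, SemiconjBy, Em_mul_Em hμ, Em_mul_Em hμ, Nat.add_comm]

theorem commute_of_mem_fk (hμ : Antitone μ) {x y : Matrix (Box k μ) (Box k μ) ℂ}
    (hx : x ∈ fk k μ i j) (hy : y ∈ fk k μ i j) : Commute x y := by
  refine commute_of_mem_span ?_ hx hy
  rintro _ ⟨m, -, -, rfl⟩ _ ⟨m', -, -, rfl⟩
  exact commute_Em hμ m m'

theorem commutator_mem_m1_of_mem_m2 (hμ : Antitone μ) {x y : Matrix (Box k μ) (Box k μ) ℂ}
    (hx : x ∈ m2 k μ i j) (hy : y ∈ m2 k μ i j) : x * y - y * x ∈ m1 k μ := by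
  obtain ⟨x₁, hx₁, x₂, hx₂, rfl⟩ := Submodule.mem_sup.1 hx
  obtain ⟨y₁, hy₁, y₂, hy₂, rfl⟩ := Submodule.mem_sup.1 hy
  have hsplit : (x₁ + x₂) * (y₁ + y₂) - (y₁ + y₂) * (x₁ + x₂) =
      ((x₁ + x₂) * y₁ - y₁ * (x₁ + x₂)) - (y₂ * x₁ - x₁ * y₂) + (x₂ * y₂ - y₂ * x₂) := by
    noncomm_ring
  rw [hsplit, (commute_of_mem_fk hμ hx₂ hy₂).eq, sub_self, add_zero]
  exact sub_mem (commutator_mem_m1 hx hy₁)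
    (commutator_mem_m1 (Submodule.mem_sup_right hy₂) hx₁)

end YoungDiagram

theorem stmt9_general
    (k : ℕ) (μ : Fin k → ℕ)
    (hanti : Antitone μ)
    (i j : Fin k)
    :
    (∀ m m' : ℕ, 1 ≤ m → m ≤ j.val - i.val → 1 ≤ m' → m' ≤ j.val - i.val →
        Em k μ i j m * Em k μ i j m' - Em k μ i j m' * Em k μ i j m = 0)
    ∧ (∀ x ∈ fk k μ i j, ∀ y ∈ fk k μ i j, x * y - y * x = 0)
    ∧ (∀ x ∈ m1 k μ, ∀ y ∈ m1 k μ, x * y - y * x ∈ m1 k μ)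
    ∧ (∀ x ∈ m2 k μ i j, ∀ y ∈ m2 k μ i j, x * y - y * x ∈ m1 k μ)
    ∧ (∀ x ∈ m2 k μ i j, ∀ y ∈ m1 k μ, x * y - y * x ∈ m1 k μ)
    ∧ m1 k μ ⊓ fk k μ i j = ⊥
    ∧ m2 k μ i j = m1 k μ ⊔ fk k μ i j :=
  ⟨fun m m' _ _ _ _ => sub_eq_zero.2 (commute_Em hanti m m').eq,
    fun _ hx _ hy => sub_eq_zero.2 (commute_of_mem_fk hanti hx hy).eq,
    fun _ hx _ hy => commutator_mem_m1 (i := i) (j := j) (Submodule.mem_sup_left hx) hy,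
    fun _ hx _ hy => commutator_mem_m1_of_mem_m2 hanti hx hy,
    fun _ hx _ hy => commutator_mem_m1 hx hy,
    m1_inf_fk, rfl⟩

/-- `[E_m, E_{m'}] = 0`, so `k` is an abelian Lie subalgebra; `m₁` is a
Lie subalgebra; `[m₂, m₂] ⊆ m₁`; consequently `m₁` is a Lie ideal of `m₂`, the sum
`m₂ = m₁ ⊕ k` is direct, and `m₂ = m₁ ⋊ k`. -/
theorem stmt9
    (k : ℕ) (n : ℕ) (μ : Fin k → ℕ)
    (hpos : ∀ r, 0 < μ r) (hanti : Antitone μ)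
    (hn : ∑ r : Fin k, μ r = n)
    (i j : Fin k) (hij : i < j)
    (hi : ∀ r, r < i → μ i < μ r)
    (hj : ∀ r, j < r → μ r < μ j)
    (hcase : (j : ℕ) = (i : ℕ) + 1 ∨ μ i = μ j)
    :
    (∀ m m' : ℕ, 1 ≤ m → m ≤ j.val - i.val → 1 ≤ m' → m' ≤ j.val - i.val →
        Em k μ i j m * Em k μ i j m' - Em k μ i j m' * Em k μ i j m = 0)
    ∧ (∀ x ∈ fk k μ i j, ∀ y ∈ fk k μ i j, x * y - y * x = 0)
    ∧ (∀ x ∈ m1 k μ, ∀ y ∈ m1 k μ, x * y - y * x ∈ m1 k μ)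
    ∧ (∀ x ∈ m2 k μ i j, ∀ y ∈ m2 k μ i j, x * y - y * x ∈ m1 k μ)
    ∧ (∀ x ∈ m2 k μ i j, ∀ y ∈ m1 k μ, x * y - y * x ∈ m1 k μ)
    ∧ m1 k μ ⊓ fk k μ i j = ⊥
    ∧ m2 k μ i j = m1 k μ ⊔ fk k μ i j :=
  stmt9_general k μ hanti i j
end

section
/- For each 1 ≤ m ≤ j − i, the commutator [e_2, E_m] lies in span{E_{t,u} : t = (r,s), u = (r',s'), s = s'}, i.e. in the degree-zero component of the grading of gl(ℂ^B) in which the matrix unit E_{(r,s),(r',s')} has degree 2(s − s') (the column grading of the right-aligned pyramid). -/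
open Matrix

/-!
Write `e₂ = e₁ + F` with `F = Σ_s E_{(i,s),(j,s)}`. Both `F` and `E_m` only join boxes in the
same column, so `[F, E_m]` does too. The remaining part `[e₁, E_m]` vanishes: both products
send `b_{r,s}` to `b_{r+m,s+1}` (when `i ≤ r`, `r + m ≤ j` and that box exists), and for
`E_m e₁` the box `(r, s+1)` it passes through exists because `μ` is antitone.
-/

namespace Matrix

variable {ι κ R : Type*}

def IsDegreeZero [Zero R] (c : ι → κ) (M : Matrix ι ι R) : Prop :=
  ∀ t u, M t u ≠ 0 → c t = c u

theorem IsDegreeZero.mul [Fintype ι] [NonUnitalNonAssocSemiring R] {c : ι → κ}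
    {A B : Matrix ι ι R} (hA : A.IsDegreeZero c) (hB : B.IsDegreeZero c) :
    (A * B).IsDegreeZero c := by
  intro t u h
  obtain ⟨v, -, hv⟩ := Finset.exists_ne_zero_of_sum_ne_zero h
  exact (hA t v (left_ne_zero_of_mul hv)).trans (hB v u (right_ne_zero_of_mul hv))

theorem IsDegreeZero.mem_span_single [Fintype ι] [DecidableEq ι] [Semiring R] {c : ι → κ}
    {M : Matrix ι ι R} (hM : M.IsDegreeZero c) :
    M ∈ Submodule.span R {x | ∃ t u, c t = c u ∧ x = single t u 1} := by
  rw [matrix_eq_sum_single M]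
  refine Submodule.sum_mem _ fun t _ => Submodule.sum_mem _ fun u _ => ?_
  by_cases h : M t u = 0
  · simp [h]
  · rw [← mul_one (M t u), ← smul_eq_mul, ← smul_single]
    exact Submodule.smul_mem _ _ (Submodule.subset_span ⟨t, u, hM t u h, rfl⟩)

end Matrix

open Matrix

section

variable {k : ℕ} {μ : Fin k → ℕ}

theorem Box.ext {t u : Box k μ} (h₁ : t.1 = u.1) (h₂ : (t.2 : ℕ) = u.2) : t = u :=
  Sigma.ext h₁ ((Fin.heq_ext_iff (congrArg μ h₁)).2 h₂)

theorem e1_mul_Em_apply (i j : Fin k) (m : ℕ) (t u : Box k μ) :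
    (e1 k μ * Em k μ i j m) t u =
      if i ≤ u.1 ∧ t.1 ≤ j ∧ t.1.val = u.1.val + m ∧ t.2.val = u.2.val + 1 then 1 else 0 := by
  rw [mul_apply]
  split_ifs with h
  · obtain ⟨h₁, h₂, h₃, h₄⟩ := h
    rw [Fintype.sum_eq_single ⟨t.1, ⟨u.2, by omega⟩⟩]
    · simp [e1, Em, h₁, h₂, h₃, h₄]
    · intro v hv
      have : ¬(v.1 = t.1 ∧ (v.2 : ℕ) = u.2) := fun h => hv (Box.ext h.1 h.2)
      simp only [e1, Em, of_apply, mul_ite, mul_one, mul_zero]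
      grind
  · refine Finset.sum_eq_zero fun v _ => ?_
    simp only [e1, Em, of_apply, mul_ite, mul_one, mul_zero]
    grind

theorem Em_mul_e1_apply (hμ : Antitone μ) (i j : Fin k) (m : ℕ) (t u : Box k μ) :
    (Em k μ i j m * e1 k μ) t u =
      if i ≤ u.1 ∧ t.1 ≤ j ∧ t.1.val = u.1.val + m ∧ t.2.val = u.2.val + 1 then 1 else 0 := by
  rw [mul_apply]
  split_ifs with h
  · obtain ⟨h₁, h₂, h₃, h₄⟩ := h
    have : μ t.1 ≤ μ u.1 := hμ (show u.1 ≤ t.1 by rw [Fin.le_def]; omega)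
    rw [Fintype.sum_eq_single ⟨u.1, ⟨u.2 + 1, by omega⟩⟩]
    · simp [e1, Em, h₁, h₂, h₃, h₄]
    · intro v hv
      have : ¬(v.1 = u.1 ∧ (v.2 : ℕ) = u.2 + 1) := fun h => hv (Box.ext h.1 h.2)
      simp only [e1, Em, of_apply, mul_ite, mul_one, mul_zero]
      grind
  · refine Finset.sum_eq_zero fun v _ => ?_
    simp only [e1, Em, of_apply, mul_ite, mul_one, mul_zero]
    grind

theorem commute_e1_Em (hμ : Antitone μ) (i j : Fin k) (m : ℕ) :
    Commute (e1 k μ) (Em k μ i j m) := by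
  ext t u
  rw [e1_mul_Em_apply, Em_mul_e1_apply hμ]

theorem isDegreeZero_Em (i j : Fin k) (m : ℕ) :
    (Em k μ i j m).IsDegreeZero fun t => (t.2 : ℕ) := by
  intro t u h
  simp only [Em, of_apply, ne_eq, ite_eq_right_iff, not_forall] at h
  exact h.1.2.2.2

theorem isDegreeZero_e2_sub_e1 (i j : Fin k) :
    (e2 k μ i j - e1 k μ).IsDegreeZero fun t => (t.2 : ℕ) := by
  intro t u h
  simp only [e2, add_sub_cancel_left, of_apply, ne_eq, ite_eq_right_iff, not_forall] at h
  exact h.1.2.2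

end

theorem stmt12_general
    (k : ℕ) (μ : Fin k → ℕ)
    (hanti : Antitone μ)
    (i j : Fin k)
    (m : ℕ) :
    e2 k μ i j * Em k μ i j m - Em k μ i j m * e2 k μ i j ∈
      Submodule.span ℂ
        {x | ∃ t u : Box k μ, t.2.val = u.2.val ∧ x = Matrix.single t u 1} := by
  have hF := isDegreeZero_e2_sub_e1 (μ := μ) i j
  have hE := isDegreeZero_Em (μ := μ) i j m
  have hcomm : e2 k μ i j * Em k μ i j m - Em k μ i j m * e2 k μ i j =
      (e2 k μ i j - e1 k μ) * Em k μ i j m - Em k μ i j m * (e2 k μ i j - e1 k μ) := by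
    rw [sub_mul, mul_sub, (commute_e1_Em hanti i j m).eq]
    abel
  rw [hcomm]
  exact Submodule.sub_mem _ (hF.mul hE).mem_span_single (hE.mul hF).mem_span_single

/-- For `1 ≤ m ≤ j − i`, the commutator `[e₂, E_m]` lies in the
degree-zero component of the column grading, i.e. in `span{E_{t,u} : s_t = s_u}`. -/
theorem stmt12
    (k : ℕ) (n : ℕ) (μ : Fin k → ℕ)
    (hpos : ∀ r, 0 < μ r) (hanti : Antitone μ)
    (hn : ∑ r : Fin k, μ r = n)
    (i j : Fin k) (hij : i < j)
    (hi : ∀ r, r < i → μ i < μ r)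
    (hj : ∀ r, j < r → μ r < μ j)
    (hcase : (j : ℕ) = (i : ℕ) + 1 ∨ μ i = μ j)
    (m : ℕ) (hm1 : 1 ≤ m) (hm2 : m ≤ j.val - i.val) :
    e2 k μ i j * Em k μ i j m - Em k μ i j m * e2 k μ i j ∈
      Submodule.span ℂ
        {x | ∃ t u : Box k μ, t.2.val = u.2.val ∧ x = Matrix.single t u 1} :=
  stmt12_general k μ hanti i j m
end

section
/- The subalgebra m_2 intersects the centralizer of e_2 trivially: if x ∈ m_2 satisfies [e_2, x] = 0, then x = 0. -/
open Matrix

/-! Write `x = y + ∑ c_m • E_m` with `y ∈ m₁`. For `q = j - m`, the row map `R_{q,j}`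
(`b_{j,s} ↦ b_{q,s}`) is the commutator `[R_{q,i}, e₂]`, so `tr (x R_{q,j}) = tr (R_{q,i} [e₂, x])`
vanishes. This trace only sees the entries `x_{(j,s),(q,s)}`, which are `0` for `y` and `c_m` for
the `E`-part, so it equals `μ_j c_m` and all `c_m` vanish. Now `x = y ∈ m₁` kills every `b_{r,0}`,
and since `e₂ b_{r,s} = b_{r,s+1}` modulo the span of the `b_{·,s}`, commuting with `e₂` carries
the vanishing from the `b_{·,s}` to the `b_{·,s+1}`. -/

section

variable {k : ℕ} {μ : Fin k → ℕ}

theorem Box.eq_mk_iff (v : Box k μ) (p : Fin k) (s : Fin (μ p)) :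
    v = ⟨p, s⟩ ↔ v.1 = p ∧ (v.2 : ℕ) = s := by
  obtain ⟨r, s'⟩ := v
  constructor
  · rintro ⟨⟩; simp
  · rintro ⟨rfl, h⟩; exact congrArg _ (Fin.ext h)

variable (k μ) in
/-- `Σ_s E_{(p,s),(r,s)}` over the `s` that fit in both rows. -/
noncomputable def rowMap (p r : Fin k) : Matrix (Box k μ) (Box k μ) ℂ :=
  Matrix.of fun t u => if t.1 = p ∧ u.1 = r ∧ t.2.val = u.2.val then 1 else 0

theorem e2_eq_e1_add_rowMap (i j : Fin k) : e2 k μ i j = e1 k μ + rowMap k μ i j := rfl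

theorem mul_e1_apply (x : Matrix (Box k μ) (Box k μ) ℂ) (t u : Box k μ) :
    (x * e1 k μ) t u = if h : u.2.val + 1 < μ u.1 then x t ⟨u.1, ⟨u.2 + 1, h⟩⟩ else 0 := by
  rw [Matrix.mul_apply]
  split_ifs with h
  · rw [Fintype.sum_eq_single ⟨u.1, ⟨u.2 + 1, h⟩⟩]
    · simp [e1]
    · intro v hv
      simp only [e1, Matrix.of_apply, mul_ite, mul_one, mul_zero]
      exact if_neg fun h' => hv ((Box.eq_mk_iff _ _ _).2 h')
  · refine Finset.sum_eq_zero fun ⟨q, s⟩ _ => ?_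
    simp only [e1, Matrix.of_apply, mul_ite, mul_one, mul_zero]
    refine if_neg ?_
    rintro ⟨rfl, h2⟩
    exact h (h2 ▸ s.isLt)

theorem mul_rowMap_apply (x : Matrix (Box k μ) (Box k μ) ℂ) (p r : Fin k) (t u : Box k μ) :
    (x * rowMap k μ p r) t u =
      if h : u.1 = r ∧ u.2.val < μ p then x t ⟨p, ⟨u.2, h.2⟩⟩ else 0 := by
  rw [Matrix.mul_apply]
  split_ifs with h
  · rw [Fintype.sum_eq_single ⟨p, ⟨u.2, h.2⟩⟩]
    · simp [rowMap, h.1]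
    · intro v hv
      simp only [rowMap, Matrix.of_apply, mul_ite, mul_one, mul_zero]
      exact if_neg fun h' => hv ((Box.eq_mk_iff _ _ _).2 ⟨h'.1, h'.2.2⟩)
  · refine Finset.sum_eq_zero fun ⟨q, s⟩ _ => ?_
    simp only [rowMap, Matrix.of_apply, mul_ite, mul_one, mul_zero]
    refine if_neg ?_
    rintro ⟨rfl, h2, h3⟩
    exact h ⟨h2, h3 ▸ s.isLt⟩

theorem rowMap_mul_e1 {p r : Fin k} (h : μ p ≤ μ r) :
    rowMap k μ p r * e1 k μ = e1 k μ * rowMap k μ p r := by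
  ext t u
  rw [mul_e1_apply, mul_rowMap_apply]
  simp only [rowMap, e1, Matrix.of_apply]
  have := t.2.isLt
  split_ifs <;> grind

theorem rowMap_mul_rowMap {p r q : Fin k} (h : μ p ≤ μ r) :
    rowMap k μ p r * rowMap k μ r q = rowMap k μ p q := by
  ext t u
  rw [mul_rowMap_apply]
  simp only [rowMap, Matrix.of_apply]
  have := t.2.isLt
  split_ifs <;> grind

theorem rowMap_mul_rowMap_of_ne {p r p' q : Fin k} (h : r ≠ p') :
    rowMap k μ p r * rowMap k μ p' q = 0 := by
  ext t u
  rw [mul_rowMap_apply]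
  simp only [rowMap, Matrix.of_apply, Matrix.zero_apply]
  split_ifs <;> grind

theorem rowMap_mul_e2_sub_e2_mul_rowMap {i j q : Fin k} (hμ : μ q ≤ μ i) (hq : q ≠ j) :
    rowMap k μ q i * e2 k μ i j - e2 k μ i j * rowMap k μ q i = rowMap k μ q j := by
  rw [e2_eq_e1_add_rowMap, mul_add, add_mul, rowMap_mul_rowMap hμ,
    rowMap_mul_rowMap_of_ne hq.symm, rowMap_mul_e1 hμ]
  abel

theorem trace_mul_rowMap (x : Matrix (Box k μ) (Box k μ) ℂ) {p r : Fin k} (h : μ r ≤ μ p) :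
    trace (x * rowMap k μ p r) = ∑ s : Fin (μ r), x ⟨r, s⟩ ⟨p, Fin.castLE h s⟩ := by
  simp only [Matrix.trace, Matrix.diag, mul_rowMap_apply]
  rw [Fintype.sum_sigma, Fintype.sum_eq_single r]
  · exact Finset.sum_congr rfl fun s _ => dif_pos ⟨rfl, s.2.trans_le h⟩
  · exact fun r' hr' => Finset.sum_eq_zero fun s _ => dif_neg fun h' => hr' h'.1

theorem trace_mul_commutator_eq_zero {n R : Type*} [Fintype n] [CommRing R]
    {e x : Matrix n n R} (h : Commute e x) (w : Matrix n n R) :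
    trace (x * (w * e - e * w)) = 0 := by
  rw [mul_sub, trace_sub, ← mul_assoc, trace_mul_comm (x * w), ← mul_assoc, h.eq, mul_assoc,
    sub_self]

theorem apply_eq_zero_of_mem_m1 {y : Matrix (Box k μ) (Box k μ) ℂ} (hy : y ∈ m1 k μ)
    {t u : Box k μ} (h : u.2.val ≤ t.2.val) : y t u = 0 := by
  induction hy using Submodule.span_induction with
  | mem _ hx =>
    obtain ⟨t', u', hlt, rfl⟩ := hx
    rw [Matrix.single_apply_of_ne]
    rintro ⟨rfl, rfl⟩
    omega
  | zero => rfl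
  | add _ _ _ _ ha hb => rw [Matrix.add_apply, ha, hb, add_zero]
  | smul _ _ _ ha => rw [Matrix.smul_apply, ha, smul_zero]

theorem eq_zero_of_commute_e2 {i j : Fin k} {x : Matrix (Box k μ) (Box k μ) ℂ}
    (h : Commute (e2 k μ i j) x) (h0 : ∀ t u : Box k μ, u.2.val = 0 → x t u = 0) : x = 0 := by
  suffices ∀ N (t u : Box k μ), u.2.val = N → x t u = 0 from
    Matrix.ext fun t u => this _ t u rfl
  intro N
  induction N with
  | zero => exact h0
  | succ N ih =>
    rintro t ⟨r, s, hs⟩ rfl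
    have key := congrFun₂ h.eq t ⟨r, ⟨N, by omega⟩⟩
    rw [Matrix.mul_apply, Finset.sum_eq_zero fun v _ => by rw [ih v _ rfl, mul_zero],
      e2_eq_e1_add_rowMap, mul_add, Matrix.add_apply, mul_e1_apply, mul_rowMap_apply, dif_pos hs,
      dite_eq_right_iff.mpr fun _ => ih _ _ rfl, add_zero] at key
    exact key.symm

theorem exists_eq_sum_Em {i j : Fin k} {z : Matrix (Box k μ) (Box k μ) ℂ}
    (hz : z ∈ fk k μ i j) :
    ∃ c : Fin (j - i) → ℂ, ∑ a, c a • Em k μ i j (a + 1) = z := by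
  have hset : {x | ∃ m : ℕ, 1 ≤ m ∧ m ≤ j.val - i.val ∧ x = Em k μ i j m}
      = Set.range fun a : Fin (j - i) => Em k μ i j (a + 1) := by
    ext x
    constructor
    · rintro ⟨m, h1, h2, rfl⟩
      exact ⟨⟨m - 1, by omega⟩, by simp only; congr; omega⟩
    · rintro ⟨a, rfl⟩
      exact ⟨a + 1, by omega, by omega, rfl⟩
  rw [fk, hset] at hz
  exact (Submodule.mem_span_range_iff_exists_fun ℂ).mp hz

theorem coeff_eq_zero_of_commute_e2 (hpos : ∀ r, 0 < μ r)
    (hanti : Antitone μ) {i j : Fin k} {y : Matrix (Box k μ) (Box k μ) ℂ} (hy : y ∈ m1 k μ)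
    (c : Fin (j - i) → ℂ) (h : Commute (e2 k μ i j) (y + ∑ a, c a • Em k μ i j (a + 1)))
    (a : Fin (j - i)) : c a = 0 := by
  set x := y + ∑ a, c a • Em k μ i j (a + 1)
  set q : Fin k := ⟨j - (a + 1), by omega⟩
  have hiq : i ≤ q := Fin.le_def.mpr (by simp only [q]; omega)
  have hqj : q < j := Fin.lt_def.mpr (by simp only [q]; omega)
  have hμ : μ j ≤ μ q := hanti hqj.le
  have hentry (s : Fin (μ j)) : x ⟨j, s⟩ ⟨q, Fin.castLE hμ s⟩ = c a := by
    have hq (b : Fin (j - i)) : j.val = q.val + (b + 1) ↔ b = a := by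
      simp only [q, Fin.ext_iff]; omega
    have hy0 : y ⟨j, s⟩ ⟨q, Fin.castLE hμ s⟩ = 0 := apply_eq_zero_of_mem_m1 hy le_rfl
    simp only [x, Matrix.add_apply, hy0, Matrix.sum_apply, Matrix.smul_apply, Em,
      Matrix.of_apply, hiq, le_refl, true_and, Fin.val_castLE, and_true, hq, smul_eq_mul,
      mul_ite, mul_one, mul_zero, zero_add]
    exact Fintype.sum_ite_eq' a c
  have htrace : trace (x * rowMap k μ q j) = 0 := by
    rw [← rowMap_mul_e2_sub_e2_mul_rowMap (hanti hiq) hqj.ne]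
    exact trace_mul_commutator_eq_zero h _
  rw [trace_mul_rowMap x hμ, Finset.sum_congr rfl fun s _ => hentry s, Finset.sum_const,
    Finset.card_univ, Fintype.card_fin, nsmul_eq_mul] at htrace
  exact (mul_eq_zero.mp htrace).resolve_left (Nat.cast_ne_zero.mpr (hpos j).ne')

end

theorem stmt13_general
    (k : ℕ) (μ : Fin k → ℕ)
    (hpos : ∀ r, 0 < μ r) (hanti : Antitone μ)
    (i j : Fin k)
    (x : Matrix (Box k μ) (Box k μ) ℂ) (hx : x ∈ m2 k μ i j)
    (hcomm : e2 k μ i j * x - x * e2 k μ i j = 0) :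
    x = 0 := by
  have hc : Commute (e2 k μ i j) x := sub_eq_zero.mp hcomm
  obtain ⟨y, hy, z, hz, rfl⟩ := Submodule.mem_sup.mp hx
  obtain ⟨c, rfl⟩ := exists_eq_sum_Em hz
  have hc0 : c = 0 := funext (coeff_eq_zero_of_commute_e2 hpos hanti hy c hc)
  simp only [hc0, Pi.zero_apply, zero_smul, Finset.sum_const_zero, add_zero] at hc ⊢
  exact eq_zero_of_commute_e2 hc fun t u hu => apply_eq_zero_of_mem_m1 hy (by omega)

/-- `m₂` intersects the centralizer of `e₂` trivially. -/
theorem stmt13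
    (k : ℕ) (n : ℕ) (μ : Fin k → ℕ)
    (hpos : ∀ r, 0 < μ r) (hanti : Antitone μ)
    (hn : ∑ r : Fin k, μ r = n)
    (i j : Fin k) (hij : i < j)
    (hi : ∀ r, r < i → μ i < μ r)
    (hj : ∀ r, j < r → μ r < μ j)
    (hcase : (j : ℕ) = (i : ℕ) + 1 ∨ μ i = μ j)
    (x : Matrix (Box k μ) (Box k μ) ℂ) (hx : x ∈ m2 k μ i j)
    (hcomm : e2 k μ i j * x - x * e2 k μ i j = 0) :
    x = 0 :=
  stmt13_general k μ hpos hanti i j x hx hcomm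
end

section
/- The dimension of m_2 is half the dimension of the adjoint nilpotent orbit of e_2: 2·dim_ℂ m_2 = n² − Σ_{a,b=1}^{k} min(λ_a, λ_b), where the right-hand side equals the dimension of the conjugation orbit of the nilpotent matrix e_2 of Jordan type λ. -/
open Matrix

/-!
The matrix units `E_{t,u}` with `s_t < s_u` together with `E_1, …, E_{j-i}` form a basis of `m₂`:
evaluation at the entries `(t, u)` and `((i+m, 1), (i, 1))` is a biorthogonal system of linear
forms. Hence `dim m₂ = N_< + (j - i)`, where `N_<` counts the pairs of boxes `(t, u)` with
`s_t < s_u`. Sorting all `n²` pairs of boxes by comparing their columns gives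
`n² = N_= + 2 N_<`, and `N_= = Σ_{a,b} min(μ_a, μ_b)`.

It remains to compare `Σ min(λ_a, λ_b)` with `Σ min(μ_a, μ_b)`. Both are sums of squared column
lengths `Σ_s c_s²`. Passing from `μ` to `λ` moves the last box of row `j` to the end of row `i`;
by the choice of `i` and `j` this changes only two column lengths, `i → i + 1` and `j + 1 → j`,
so the sum drops by `2(j - i)`.
-/

open Finset

lemma card_filter_range_lt (m m' : ℕ) : #{s ∈ range m | s < m'} = min m m' := by
  rw [show {s ∈ range m | s < m'} = range (min m m') by
    ext; simp only [mem_filter, mem_range]; omega, card_range]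

section ColumnLengths

variable {k : ℕ}

def colLen (x : Fin k → ℕ) (s : ℕ) : ℕ := #{a | s < x a}

theorem sum_min_eq_sum_colLen_sq (x : Fin k → ℕ) {M : ℕ} (hM : ∀ a, x a ≤ M) :
    ∑ a, ∑ b, min (x a) (x b) = ∑ s ∈ range M, colLen x s ^ 2 := by
  have hmin (a b : Fin k) :
      min (x a) (x b) = ∑ s ∈ range M, if s < x a ∧ s < x b then 1 else 0 := by
    simp_rw [← card_filter, ← lt_min_iff]
    rw [card_filter_range_lt, min_eq_right (min_le_of_left_le (hM a))]
  simp_rw [hmin, colLen, card_filter, sq, sum_mul_sum, ite_zero_mul_ite_zero, mul_one]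
  exact (sum_congr rfl fun a _ => Finset.sum_comm).trans Finset.sum_comm

lemma colLen_eq_card {x : Fin k → ℕ} {s : ℕ} {p : Finset (Fin k)}
    (h : ∀ a, s < x a ↔ a ∈ p) : colLen x s = #p := by
  rw [colLen]
  congr 1
  ext a
  simp only [mem_filter, mem_univ, true_and, h]

end ColumnLengths

section Covering

variable {k : ℕ} {μ : Fin k → ℕ} {i j : Fin k}

lemma lt_apply_iff_of_antitone (hanti : Antitone μ) (hi : ∀ r, r < i → μ i < μ r)
    (a : Fin k) : μ i < μ a ↔ a < i :=
  ⟨fun h => lt_of_not_ge fun hia => (hanti hia).not_gt h, hi a⟩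

lemma pred_lt_apply_iff_of_antitone (hanti : Antitone μ) (hpos : 0 < μ j)
    (hj : ∀ r, j < r → μ r < μ j) (a : Fin k) : μ j - 1 < μ a ↔ a ≤ j := by
  refine ⟨fun h => le_of_not_gt fun hja => ?_, fun h => ?_⟩
  · have := hj a hja
    omega
  · have := hanti h
    omega

lemma lam_le_succ (a : Fin k) : lam k μ i j a ≤ μ a + 1 := by
  unfold lam
  split_ifs with h1 h2 <;> subst_vars <;> omega

lemma colLen_lam_of_ne {s : ℕ} (hs₁ : s ≠ μ i) (hs₂ : s ≠ μ j - 1) :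
    colLen (lam k μ i j) s = colLen μ s := by
  unfold colLen lam
  congr 1
  ext a
  simp only [mem_filter, mem_univ, true_and]
  split_ifs with h1 h2 <;> subst_vars <;> omega

lemma colLen_length_left (hanti : Antitone μ) (hi : ∀ r, r < i → μ i < μ r) :
    colLen μ (μ i) = i := by
  rw [colLen_eq_card (p := Iio i) fun a => by rw [mem_Iio, lt_apply_iff_of_antitone hanti hi],
    Fin.card_Iio]

lemma colLen_pred_length_right (hanti : Antitone μ) (hpos : 0 < μ j)
    (hj : ∀ r, j < r → μ r < μ j) : colLen μ (μ j - 1) = j + 1 := by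
  rw [colLen_eq_card (p := Iic j) fun a => by
    rw [mem_Iic, pred_lt_apply_iff_of_antitone hanti hpos hj], Fin.card_Iic]

lemma colLen_lam_length_left (hanti : Antitone μ) (hij : i < j)
    (hi : ∀ r, r < i → μ i < μ r) : colLen (lam k μ i j) (μ i) = i + 1 := by
  refine (colLen_eq_card (p := Iic i) fun a => ?_).trans (Fin.card_Iic i)
  have := hanti hij.le
  have := lt_apply_iff_of_antitone hanti hi a
  unfold lam
  split_ifs with h1 h2 <;> subst_vars <;> simp only [mem_Iic] <;> omega

lemma colLen_lam_pred_length_right (hanti : Antitone μ) (hij : i < j) (hpos : 0 < μ j)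
    (hj : ∀ r, j < r → μ r < μ j) : colLen (lam k μ i j) (μ j - 1) = j := by
  refine (colLen_eq_card (p := Iio j) fun a => ?_).trans (Fin.card_Iio j)
  have := pred_lt_apply_iff_of_antitone hanti hpos hj a
  unfold lam
  split_ifs with h1 h2 <;> subst_vars <;> simp only [mem_Iio] <;> omega

theorem sum_min_lam_add_two_mul_sub (hpos : ∀ r, 0 < μ r) (hanti : Antitone μ) (hij : i < j)
    (hi : ∀ r, r < i → μ i < μ r) (hj : ∀ r, j < r → μ r < μ j) :
    ∑ a, ∑ b, min (lam k μ i j a) (lam k μ i j b) + 2 * (j - i : ℕ) =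
      ∑ a, ∑ b, min (μ a) (μ b) := by
  set M := ∑ a, μ a + 1
  have hμM (a : Fin k) : μ a + 1 ≤ M := by
    have := single_le_sum (fun b _ => Nat.zero_le (μ b)) (mem_univ a)
    omega
  rw [sum_min_eq_sum_colLen_sq μ (M := M) fun a => (Nat.le_succ _).trans (hμM a),
    sum_min_eq_sum_colLen_sq (lam k μ i j) (M := M) fun a => (lam_le_succ a).trans (hμM a)]
  have hji : μ j ≤ μ i := hanti hij.le
  have hμj := hpos j
  have hdiff : ∑ s ∈ range M, ((colLen μ s : ℤ) ^ 2 - colLen (lam k μ i j) s ^ 2) =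
      2 * ((j : ℤ) - i) := by
    have hmem_i : μ i ∈ range M := mem_range.2 (hμM i)
    have hmem_j : μ j - 1 ∈ range M := mem_range.2 (by have := hμM j; omega)
    rw [sum_eq_add_of_mem (μ i) (μ j - 1) hmem_i hmem_j (by omega)
        fun s _ hs => by rw [colLen_lam_of_ne hs.1 hs.2, sub_self],
      colLen_length_left hanti hi, colLen_pred_length_right hanti hμj hj,
      colLen_lam_length_left hanti hij hi, colLen_lam_pred_length_right hanti hij hμj hj]
    push_cast
    ring
  rw [sum_sub_distrib] at hdiff
  have hij' : (i : ℕ) ≤ j := hij.le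
  zify [hij']
  linarith

end Covering

theorem card_sq_eq_card_eq_add_two_mul_card_lt {α β : Type*} [Fintype α] [LinearOrder β]
    (c : α → β) :
    Fintype.card α ^ 2 =
      #{p : α × α | c p.1 = c p.2} + 2 * #{p : α × α | c p.1 < c p.2} := by
  have hswap : #{p : α × α | c p.2 < c p.1} = #{p : α × α | c p.1 < c p.2} :=
    card_equiv (Equiv.prodComm α α) fun p => by simp
  have htri : #{p : α × α | c p.1 = c p.2} + #{p : α × α | c p.1 < c p.2} +
      #{p : α × α | c p.2 < c p.1} = Fintype.card (α × α) := by
    simp only [card_filter, ← sum_add_distrib, Fintype.card_eq_sum_ones]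
    refine sum_congr rfl fun p _ => ?_
    rcases lt_trichotomy (c p.1) (c p.2) with h | h | h
    · simp [h, h.ne, h.not_gt]
    · simp [h]
    · simp [h, h.ne', h.not_gt]
  rw [sq, ← Fintype.card_prod, ← htri, hswap]
  ring

lemma card_fin_prod_val_eq_val (m m' : ℕ) :
    #{p : Fin m × Fin m' | p.1.val = p.2.val} = min m m' := by
  rw [card_filter, Fintype.sum_prod_type]
  have hrow (s : Fin m) : ∑ s' : Fin m', (if (s : ℕ) = s' then 1 else 0) =
      if (s : ℕ) < m' then 1 else 0 := by
    rw [Fin.sum_univ_eq_sum_range (fun s' => if (s : ℕ) = s' then 1 else 0), sum_ite_eq]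
    simp only [mem_range]
  dsimp only
  rw [sum_congr rfl fun s _ => hrow s,
    Fin.sum_univ_eq_sum_range (fun s => if s < m' then 1 else 0), ← card_filter,
    card_filter_range_lt]

lemma card_sameColumn_eq_sum_min (k : ℕ) (μ : Fin k → ℕ) :
    #{p : Box k μ × Box k μ | p.1.2.val = p.2.2.val} = ∑ a, ∑ b, min (μ a) (μ b) := by
  simp_rw [← card_fin_prod_val_eq_val, card_filter, Fintype.sum_prod_type, Fintype.sum_sigma]
  exact sum_congr rfl fun a _ => Finset.sum_comm

section Basis

variable {k : ℕ} {μ : Fin k → ℕ} {i j : Fin k}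

abbrev M2Index (k : ℕ) (μ : Fin k → ℕ) (i j : Fin k) :=
  {p : Box k μ × Box k μ // p.1.2.val < p.2.2.val} ⊕ Fin (j.val - i.val)

noncomputable def m2Family (k : ℕ) (μ : Fin k → ℕ) (i j : Fin k) :
    M2Index k μ i j → Matrix (Box k μ) (Box k μ) ℂ :=
  Sum.elim (fun p => single p.1.1 p.1.2 1) (fun d => Em k μ i j (d + 1))

def m2Witness (hpos : ∀ r, 0 < μ r) : M2Index k μ i j → Box k μ × Box k μ :=
  Sum.elim Subtype.val fun d =>
    (⟨⟨i + d + 1, by omega⟩, ⟨0, hpos _⟩⟩, ⟨i, ⟨0, hpos i⟩⟩)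

lemma m2Family_apply_m2Witness (hpos : ∀ r, 0 < μ r) (x y : M2Index k μ i j) :
    m2Family k μ i j y (m2Witness hpos x).1 (m2Witness hpos x).2 = if x = y then 1 else 0 := by
  rcases x with ⟨⟨t, u⟩, htu⟩ | d <;> rcases y with ⟨⟨t', u'⟩, htu'⟩ | d'
  · simp [m2Family, m2Witness, single_apply, eq_comm]
  · simp only [m2Family, m2Witness, Sum.elim_inl, Sum.elim_inr, Em, of_apply, reduceCtorEq,
      if_false]
    exact if_neg fun h => htu.ne h.2.2.2
  · simp only [m2Family, m2Witness, Sum.elim_inl, Sum.elim_inr, single_apply, reduceCtorEq,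
      if_false]
    refine if_neg ?_
    rintro ⟨rfl, rfl⟩
    exact htu'.ne rfl
  · have hd := d.isLt
    simp only [m2Family, m2Witness, Sum.elim_inr, Em, of_apply, Sum.inr.injEq, Fin.ext_iff,
      Fin.le_def]
    split_ifs <;> grind

lemma linearIndependent_m2Family (hpos : ∀ r, 0 < μ r) :
    LinearIndependent ℂ (m2Family k μ i j) := by
  refine .of_pairwise_dual_eq_zero_one _
    (fun x => entryLinearMap ℂ ℂ (m2Witness hpos x).1 (m2Witness hpos x).2) (fun x y hxy => ?_)
    fun x => ?_
  · simpa [hxy] using m2Family_apply_m2Witness hpos x y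
  · simpa using m2Family_apply_m2Witness hpos x x

lemma span_range_m2Family : Submodule.span ℂ (Set.range (m2Family k μ i j)) = m2 k μ i j := by
  rw [m2Family, Set.Sum.elim_range, Submodule.span_union, m2, m1, fk]
  congr 2
  · ext x
    constructor
    · rintro ⟨⟨⟨t, u⟩, h⟩, rfl⟩
      exact ⟨t, u, h, rfl⟩
    · rintro ⟨t, u, h, rfl⟩
      exact ⟨⟨(t, u), h⟩, rfl⟩
  · ext x
    constructor
    · rintro ⟨d, rfl⟩
      exact ⟨d + 1, by omega, by omega, rfl⟩
    · rintro ⟨m, h1, h2, rfl⟩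
      exact ⟨⟨m - 1, by omega⟩, by simp only [Nat.sub_add_cancel h1]⟩

theorem finrank_m2 (hpos : ∀ r, 0 < μ r) :
    Module.finrank ℂ (m2 k μ i j) =
      #{p : Box k μ × Box k μ | p.1.2.val < p.2.2.val} + (j - i : ℕ) := by
  rw [← span_range_m2Family, finrank_span_eq_card (linearIndependent_m2Family hpos),
    Fintype.card_sum, Fintype.card_subtype, Fintype.card_fin]

end Basis

theorem stmt14_general
    (k : ℕ) (n : ℕ) (μ : Fin k → ℕ)
    (hpos : ∀ r, 0 < μ r) (hanti : Antitone μ)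
    (hn : ∑ r : Fin k, μ r = n)
    (i j : Fin k) (hij : i < j)
    (hi : ∀ r, r < i → μ i < μ r)
    (hj : ∀ r, j < r → μ r < μ j)
    :
    2 * Module.finrank ℂ (m2 k μ i j) =
      n ^ 2 - ∑ a : Fin k, ∑ b : Fin k, min (lam k μ i j a) (lam k μ i j b) := by
  have hsq := card_sq_eq_card_eq_add_two_mul_card_lt fun t : Box k μ => t.2.val
  rw [card_sameColumn_eq_sum_min, Fintype.card_sigma] at hsq
  simp only [Fintype.card_fin, hn] at hsq
  rw [finrank_m2 hpos, hsq, ← sum_min_lam_add_two_mul_sub hpos hanti hij hi hj]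
  omega

/-- `2·dim m₂ = n² − Σ_{a,b} min(λ_a, λ_b)`, half the dimension of the
adjoint nilpotent orbit of `e₂` (of Jordan type `λ`). -/
theorem stmt14
    (k : ℕ) (n : ℕ) (μ : Fin k → ℕ)
    (hpos : ∀ r, 0 < μ r) (hanti : Antitone μ)
    (hn : ∑ r : Fin k, μ r = n)
    (i j : Fin k) (hij : i < j)
    (hi : ∀ r, r < i → μ i < μ r)
    (hj : ∀ r, j < r → μ r < μ j)
    (hcase : (j : ℕ) = (i : ℕ) + 1 ∨ μ i = μ j)
    :
    2 * Module.finrank ℂ (m2 k μ i j) =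
      n ^ 2 - ∑ a : Fin k, ∑ b : Fin k, min (lam k μ i j a) (lam k μ i j b) :=
  stmt14_general k n μ hpos hanti hn i j hij hi hj
end

section
/- In the subregular case μ = (n−1, 1) with i = 1 and j = 2 (so λ = (n)): the element e_2 is a regular nilpotent, i.e. e_2^{n−1} ≠ 0 and e_2^n = 0 (a single Jordan block of size n); and m_2 equals span{E_{t,u} : t = (r,s), u = (r',s'), with s < s' or (s = s' and r > r')}, which is exactly the set of matrices that are strictly lower triangular with respect to the total order on B in which (r',s') precedes (r,s) iff s < s' or (s = s' and r > r'). In particular dim_ℂ m_2 = n(n−1)/2, which is half the dimension of the regular nilpotent orbit, and m_2 is the nilradical of a Borel subalgebra of sl_n(ℂ), a Premet subalgebra for the regular nilpotent e_2. -/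
open Matrix

/-!
Number the boxes of `(n - 1, 1)` as `(2,1), (1,1), (1,2), …, (1,n-1)`. In this numbering `e₂`
becomes the lower shift matrix on `ℂⁿ`, a single nilpotent Jordan block, and the order of the
statement becomes the usual order of `Fin n`. The space `m₁` supplies the matrix units
`E_{t,u}` with `s_t < s_u`, and `k` is spanned by `E_{(2,1),(1,1)}`, the matrix unit of the only
pair of boxes in a common column; hence `m₂` is spanned by the `n choose 2` strictly lower
triangular matrix units.
-/

namespace Matrix

variable {K ι : Type*} [Field K] [Fintype ι] [DecidableEq ι]

theorem setOf_single_eq_image (P : ι → ι → Prop) :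
    {x : Matrix ι ι K | ∃ t u, P t u ∧ x = single t u 1} =
      stdBasis K ι ι '' {p | P p.1 p.2} := by
  ext x
  simp [stdBasis_eq_single, eq_comm]

theorem coe_span_single (P : ι → ι → Prop) :
    (Submodule.span K {x : Matrix ι ι K | ∃ t u, P t u ∧ x = single t u 1} :
      Set (Matrix ι ι K)) = {x | ∀ t u, ¬ P t u → x t u = 0} := by
  ext x
  rw [setOf_single_eq_image, SetLike.mem_coe, Module.Basis.mem_span_image]
  simp [Set.subset_def, stdBasis, not_imp_comm]

theorem finrank_span_single (P : ι → ι → Prop) :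
    Module.finrank K (Submodule.span K {x : Matrix ι ι K | ∃ t u, P t u ∧ x = single t u 1}) =
      Nat.card {p : ι × ι // P p.1 p.2} := by
  classical
  rw [setOf_single_eq_image, Set.image_eq_range]
  exact (finrank_span_eq_card ((stdBasis K ι ι).linearIndependent.comp _
    Subtype.val_injective)).trans Nat.card_eq_fintype_card.symm

variable {R : Type*} [Semiring R]

def shift (n : ℕ) : Matrix (Fin n) (Fin n) R :=
  of fun i j => if (i : ℕ) = j + 1 then 1 else 0

theorem shift_pow (n k : ℕ) :
    shift n ^ k =
      (of fun i j => if (i : ℕ) = j + k then 1 else 0 : Matrix (Fin n) (Fin n) R) := by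
  induction k with
  | zero => ext i j; simp [one_apply, Fin.ext_iff]
  | succ k ih =>
    ext i j
    rw [pow_succ, ih, mul_apply]
    simp only [shift, of_apply, mul_ite, mul_one, mul_zero]
    rw [Fin.sum_univ_eq_sum_range
      (fun l => if l = j + 1 then if (i : ℕ) = l + k then (1 : R) else 0 else 0),
      Finset.sum_ite_eq']
    have := i.isLt
    split_ifs <;> simp_all only [Finset.mem_range] <;> omega

theorem shift_pow_eq_zero {n k : ℕ} (h : n ≤ k) :
    (shift n : Matrix (Fin n) (Fin n) R) ^ k = 0 := by
  ext i j
  rw [shift_pow, of_apply, if_neg (by omega), zero_apply]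

theorem shift_pow_ne_zero [Nontrivial R] {n k : ℕ} (h : k < n) :
    (shift n : Matrix (Fin n) (Fin n) R) ^ k ≠ 0 := by
  intro h0
  have := congr_fun₂ h0 ⟨k, h⟩ ⟨0, by omega⟩
  simp [shift_pow] at this

end Matrix

def BoxLT {k : ℕ} {μ : Fin k → ℕ} (t u : Box k μ) : Prop :=
  t.2.val < u.2.val ∨ (t.2.val = u.2.val ∧ u.1 < t.1)

def hookBoxEquiv (m : ℕ) : Box 2 ![m, 1] ≃ Fin (m + 1) where
  toFun
    | ⟨0, s⟩ => Fin.succ s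
    | ⟨1, _⟩ => 0
  invFun := Fin.cases ⟨1, (0 : Fin 1)⟩ fun s => ⟨0, s⟩
  left_inv := by
    rintro ⟨r, s⟩
    fin_cases r
    · rfl
    · exact congrArg _ (Subsingleton.elim (α := Fin 1) _ _)
  right_inv i := by
    cases i using Fin.cases <;> rfl

@[simp] theorem hookBoxEquiv_zero {m : ℕ} (s : Fin m) : hookBoxEquiv m ⟨0, s⟩ = s.succ := rfl
@[simp] theorem hookBoxEquiv_one {m : ℕ} (s : Fin 1) : hookBoxEquiv m ⟨1, s⟩ = 0 := rfl

theorem hookBox_forall {m : ℕ} {p : Box 2 ![m, 1] → Prop} :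
    (∀ t, p t) ↔ p ⟨1, (0 : Fin 1)⟩ ∧ ∀ s : Fin m, p ⟨0, s⟩ :=
  (hookBoxEquiv m).forall_congr_left.trans Fin.forall_fin_succ

theorem e2_hook_eq_reindexAlgEquiv_shift (m : ℕ) :
    e2 2 ![m, 1] 0 1 = reindexAlgEquiv ℂ ℂ (hookBoxEquiv m).symm (shift (m + 1)) := by
  rw [← Matrix.ext_iff]
  simp [hookBox_forall, e2, e1, shift]

theorem hookBoxEquiv_lt_iff {m : ℕ} (t u : Box 2 ![m, 1]) :
    hookBoxEquiv m t < hookBoxEquiv m u ↔ BoxLT t u := by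
  revert t u
  simp [BoxLT, hookBox_forall, Fin.succ_pos, ← Nat.le_iff_lt_or_eq]

theorem card_subtype_fst_lt_snd {α : Type*} [Fintype α] [LinearOrder α] :
    Nat.card {q : α × α // q.1 < q.2} = (Fintype.card α).choose 2 := by
  classical
  rw [Nat.card_eq_fintype_card, Fintype.card_subtype, ← Finset.univ_product_univ,
    Finset.card_product_filter_lt, Finset.card_univ]

theorem card_boxLT_hook (m : ℕ) :
    Nat.card {p : Box 2 ![m, 1] × Box 2 ![m, 1] // BoxLT p.1 p.2} = (m + 1).choose 2 := by
  rw [← Fintype.card_fin (m + 1), ← card_subtype_fst_lt_snd]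
  exact Nat.card_congr <| ((hookBoxEquiv m).prodCongr (hookBoxEquiv m)).subtypeEquiv
    (q := fun q => q.1 < q.2) fun p => (hookBoxEquiv_lt_iff p.1 p.2).symm

theorem m2_le_span_boxLT (k : ℕ) (μ : Fin k → ℕ) (i j : Fin k) :
    m2 k μ i j ≤
      Submodule.span ℂ {x | ∃ t u : Box k μ, BoxLT t u ∧ x = single t u 1} := by
  refine sup_le (Submodule.span_mono fun x ⟨t, u, h, hx⟩ => ⟨t, u, Or.inl h, hx⟩) ?_
  refine Submodule.span_le.mpr ?_
  rintro _ ⟨m, hm, -, rfl⟩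
  rw [coe_span_single]
  intro t u htu
  refine if_neg fun ⟨_, _, hr, hs⟩ => htu (Or.inr ⟨hs, ?_⟩)
  rw [Fin.lt_def]
  omega

theorem fk_zero_one (μ : Fin 2 → ℕ) : fk 2 μ 0 1 = Submodule.span ℂ {Em 2 μ 0 1 1} := by
  rw [fk]
  congr 1
  ext x
  simp only [Set.mem_ofPred_eq, Set.mem_singleton_iff, Fin.val_one, Fin.val_zero]
  constructor
  · rintro ⟨m, h1, h2, rfl⟩
    obtain rfl : m = 1 := by omega
    rfl
  · rintro rfl
    exact ⟨1, le_rfl, le_rfl, rfl⟩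

theorem Em_hook_eq_single {m : ℕ} {t u : Box 2 ![m, 1]} (hs : t.2.val = u.2.val)
    (hr : u.1 < t.1) : Em 2 ![m, 1] 0 1 1 = single t u 1 := by
  revert t u
  simp only [hookBox_forall]
  refine ⟨⟨by simp, fun s hs _ => ?_⟩, fun s => ⟨by simp, by simp⟩⟩
  rw [← Matrix.ext_iff]
  simp only [hookBox_forall]
  -- compare boxes through `hookBoxEquiv`, avoiding heterogeneous equality of second coordinates
  simp [Em, single, ← (hookBoxEquiv m).apply_eq_iff_eq, Fin.ext_iff, ← hs,
    eq_comm (b := (0 : ℕ))]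

theorem m2_hook_eq_span_boxLT (m : ℕ) :
    m2 2 ![m, 1] 0 1 =
      Submodule.span ℂ {x | ∃ t u : Box 2 ![m, 1], BoxLT t u ∧ x = single t u 1} := by
  refine le_antisymm (m2_le_span_boxLT _ _ _ _) (Submodule.span_le.mpr ?_)
  rintro _ ⟨t, u, h | ⟨hs, hr⟩, rfl⟩
  · exact Submodule.mem_sup_left (Submodule.subset_span ⟨t, u, h, rfl⟩)
  · rw [← Em_hook_eq_single hs hr]
    exact Submodule.mem_sup_right (fk_zero_one _ ▸ Submodule.mem_span_singleton_self _)

/-- In the subregular case `μ = (n−1, 1)`, `i = 1`, `j = 2`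
(so `λ = (n)`): the element `e₂` is a regular nilpotent (a single Jordan block of
size `n`); `m₂` is exactly the span of the matrix units `E_{t,u}` with `s_t < s_u`, or
`s_t = s_u` and `r_t > r_u`, i.e. the set of matrices strictly lower triangular with
respect to the total order in which `(r',s')` precedes `(r,s)` iff `s < s'`, or
`s = s'` and `r > r'`; and `dim m₂ = n(n−1)/2`, half the dimension of the regular
nilpotent orbit (`m₂` is the nilradical of a Borel subalgebra of `sl_n(ℂ)`, a Premet
subalgebra for `e₂`). -/
theorem stmt16 (n : ℕ) (hn : 2 ≤ n) (μ : Fin 2 → ℕ) (hμ : μ = ![n - 1, 1]) :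
    (e2 2 μ 0 1) ^ (n - 1) ≠ 0
    ∧ (e2 2 μ 0 1) ^ n = 0
    ∧ m2 2 μ 0 1 =
        Submodule.span ℂ
          {x | ∃ t u : Box 2 μ,
            (t.2.val < u.2.val ∨ (t.2.val = u.2.val ∧ u.1 < t.1)) ∧
            x = Matrix.single t u 1}
    ∧ (m2 2 μ 0 1 : Set (Matrix (Box 2 μ) (Box 2 μ) ℂ)) =
        {x | ∀ t u : Box 2 μ,
          ¬(t.2.val < u.2.val ∨ (t.2.val = u.2.val ∧ u.1 < t.1)) → x t u = 0}
    ∧ Module.finrank ℂ (m2 2 μ 0 1) = n * (n - 1) / 2 := by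
  obtain ⟨m, rfl⟩ : ∃ m, n = m + 1 := ⟨n - 1, by omega⟩
  rw [Nat.add_sub_cancel] at hμ
  subst hμ
  simp only [Nat.add_sub_cancel]
  have hpow (k : ℕ) : e2 2 ![m, 1] 0 1 ^ k =
      reindexAlgEquiv ℂ ℂ (hookBoxEquiv m).symm (shift (m + 1) ^ k) := by
    rw [map_pow, e2_hook_eq_reindexAlgEquiv_shift]
  have hm2 := m2_hook_eq_span_boxLT m
  refine ⟨?_, ?_, hm2, hm2 ▸ coe_span_single _, ?_⟩
  · rw [hpow, map_ne_zero_iff _ (AlgEquiv.injective _)]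
    exact shift_pow_ne_zero (Nat.lt_succ_self m)
  · rw [hpow, shift_pow_eq_zero le_rfl, map_zero]
  · rw [hm2, finrank_span_single, card_boxLT_hook, Nat.choose_two_right, Nat.add_sub_cancel]
end
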